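/- arXiv:1306.6050 — 8 statements merged into one kernel-verified Lean document; each statement's English description precedes it below -/
import Mathlib

section
/- Let Ω be a finite set, let G be a transitive subgroup of Sym(Ω), and let 𝒫 be a G-regular partition of Ω. Then 𝒫 is uniform, i.e., all parts of 𝒫 have the same cardinality. -/
/-- A section of a partition: a set containing exactly one element of each part. -/
def IsSection {Ω : Type*} (P : Set (Set Ω)) (S : Set Ω) : Prop :=
  ∀ B ∈ P, ∃! x, x ∈ S ∧ x ∈ B

/-- A partition is `G`-regular if it admits a section `S` such that `Sg` is a
section for every `g ∈ G`. -/
def IsGRegular {Ω : Type*} (G : Subgroup (Equiv.Perm Ω)) (P : Set (Set Ω)) : Prop :=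
  ∃ S : Set Ω, IsSection P S ∧ ∀ g ∈ G, IsSection P ((⇑g) '' S)

/-- The trivial partitions: the one-block partition and the partition into singletons. -/
def IsTrivialPartition {Ω : Type*} (P : Set (Set Ω)) : Prop :=
  P = {Set.univ} ∨ P = Set.range (fun x : Ω => ({x} : Set Ω))

/-- A permutation group is transitive if any point can be mapped to any other. -/
def IsTransitivePermGroup {Ω : Type*} (G : Subgroup (Equiv.Perm Ω)) : Prop :=
  ∀ a b : Ω, ∃ g ∈ G, g a = b

/-- A partition is `G`-invariant if `G` permutes its parts. -/
def IsInvariantPartition {Ω : Type*} (G : Subgroup (Equiv.Perm Ω)) (P : Set (Set Ω)) : Prop :=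
  ∀ g ∈ G, ∀ B ∈ P, (⇑g) '' B ∈ P

/-- A permutation group is primitive if it is transitive and preserves no
non-trivial partition. -/
def IsPrimitivePermGroup {Ω : Type*} (G : Subgroup (Equiv.Perm Ω)) : Prop :=
  IsTransitivePermGroup G ∧
    ∀ P : Set (Set Ω), Setoid.IsPartition P → IsInvariantPartition G P → IsTrivialPartition P

/-- A permutation group is synchronizing if it is non-trivial and its only
`G`-regular partitions are the trivial ones. -/
def IsSynchronizing {Ω : Type*} (G : Subgroup (Equiv.Perm Ω)) : Prop :=
  G ≠ ⊥ ∧ ∀ P : Set (Set Ω), Setoid.IsPartition P → IsGRegular G P → IsTrivialPartition P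

/-!
Fix a part `B` and double count the pairs `(g, s)` with `g ∈ G`, `s ∈ S` and `g s ∈ B`. Since
`Sg` is a section, every `g` occurs in exactly one pair. Since `G` is transitive, for each `s` the
number of `g` with `g s ∈ B` does not depend on `s`; averaging over all `s ∈ Ω` shows that it is
`|G| |B| / |Ω|`. Hence `|S| |B| = |Ω|` for every part `B`.
-/

open Finset MulAction

section Counting

variable {G α : Type*} [Group G] [MulAction G α] [DecidableEq α]

theorem card_filter_smul_mem_eq_of_smul_eq [Fintype G] (B : Finset α) {a x : α} {h : G}
    (hx : h • a = x) :
    #{g : G | g • x ∈ B} = #{g : G | g • a ∈ B} := by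
  subst hx
  simp only [card_filter, smul_smul]
  exact Fintype.sum_equiv (Equiv.mulRight h) _ _ fun _ ↦ rfl

theorem card_filter_smul_mem_eq [Fintype α] (B : Finset α) (g : G) :
    #{x : α | g • x ∈ B} = #B := by
  rw [card_filter]
  exact (Fintype.sum_equiv (toPerm g) _ (fun y ↦ if y ∈ B then 1 else 0) fun _ ↦ rfl).trans
    (by simp)

variable [Fintype G] [Fintype α]

theorem card_mul_card_filter_smul_mem [IsPretransitive G α] (B : Finset α) (a : α) :
    Fintype.card α * #{g : G | g • a ∈ B} = Fintype.card G * #B := by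
  have hconst (x : α) : #{g : G | g • x ∈ B} = #{g : G | g • a ∈ B} := by
    obtain ⟨h, hx⟩ := exists_smul_eq G a x
    exact card_filter_smul_mem_eq_of_smul_eq B hx
  calc Fintype.card α * #{g : G | g • a ∈ B}
      = ∑ x : α, #{g : G | g • x ∈ B} := by simp [hconst]
    _ = ∑ g : G, #{x : α | g • x ∈ B} := by simp only [card_filter]; exact sum_comm
    _ = Fintype.card G * #B := by simp [card_filter_smul_mem_eq]

theorem card_mul_card_eq_of_forall_existsUnique_smul_mem [IsPretransitive G α] {S B : Finset α}
    (h : ∀ g : G, ∃! s, s ∈ S ∧ g • s ∈ B) : #S * #B = Fintype.card α := by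
  have hcount : ∑ s ∈ S, #{g : G | g • s ∈ B} = Fintype.card G := by
    have hone (g : G) : #{s ∈ S | g • s ∈ B} = 1 := by
      simpa only [card_eq_one_iff_existsUnique, mem_filter] using h g
    simp only [card_filter]
    rw [sum_comm]
    simp [hone]
  apply Nat.eq_of_mul_eq_mul_left (Fintype.card_pos (α := G))
  calc Fintype.card G * (#S * #B) = ∑ s ∈ S, Fintype.card α * #{g : G | g • s ∈ B} := by
        simp [card_mul_card_filter_smul_mem]; ring
    _ = Fintype.card G * Fintype.card α := by rw [← mul_sum, hcount, mul_comm]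

end Counting

theorem IsSection.existsUnique_mem_of_image {Ω : Type*} {P : Set (Set Ω)} {S : Set Ω}
    {f : Ω → Ω} (hS : IsSection P (f '' S)) (hf : f.Injective) {B : Set Ω} (hB : B ∈ P) :
    ∃! s, s ∈ S ∧ f s ∈ B := by
  obtain ⟨_, ⟨⟨s, hs, rfl⟩, hsB⟩, huniq⟩ := hS B hB
  exact ⟨s, ⟨hs, hsB⟩, fun t ht ↦ hf (huniq (f t) ⟨⟨t, ht.1, rfl⟩, ht.2⟩)⟩

theorem IsTransitivePermGroup.isPretransitive {Ω : Type*} {G : Subgroup (Equiv.Perm Ω)}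
    (hG : IsTransitivePermGroup G) : IsPretransitive G Ω :=
  ⟨fun a b ↦ let ⟨g, hg, hgab⟩ := hG a b; ⟨⟨g, hg⟩, hgab⟩⟩

theorem stmt0_general {Ω : Type*} [Finite Ω] (G : Subgroup (Equiv.Perm Ω))
    (hG : IsTransitivePermGroup G) (P : Set (Set Ω))
    (hreg : IsGRegular G P) :
    ∀ B₁ ∈ P, ∀ B₂ ∈ P, B₁.ncard = B₂.ncard := by
  classical
  have := Fintype.ofFinite Ω
  have := Fintype.ofFinite G
  have := hG.isPretransitive
  obtain ⟨S, hS, hSg⟩ := hreg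
  have hprod (B : Set Ω) (hB : B ∈ P) : #S.toFinset * #B.toFinset = Fintype.card Ω :=
    card_mul_card_eq_of_forall_existsUnique_smul_mem fun g : G ↦ by
      simpa [Subgroup.smul_def] using
        (hSg g g.2).existsUnique_mem_of_image (g : Equiv.Perm Ω).injective hB
  intro B₁ hB₁ B₂ hB₂
  obtain ⟨s, ⟨hs, -⟩, -⟩ := hS B₁ hB₁
  rw [Set.ncard_eq_toFinset_card', Set.ncard_eq_toFinset_card']
  exact Nat.eq_of_mul_eq_mul_left (card_pos.2 ⟨s, by simpa⟩)
    ((hprod B₁ hB₁).trans (hprod B₂ hB₂).symm)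

/-- A `G`-regular partition for a transitive group on a finite set is uniform. -/
theorem stmt0 {Ω : Type*} [Finite Ω] (G : Subgroup (Equiv.Perm Ω))
    (hG : IsTransitivePermGroup G) (P : Set (Set Ω)) (hP : Setoid.IsPartition P)
    (hreg : IsGRegular G P) :
    ∀ B₁ ∈ P, ∀ B₂ ∈ P, B₁.ncard = B₂.ncard :=
  stmt0_general G hG P hreg
end

section
/- Let Ω be a finite set, let G be a primitive subgroup of Sym(Ω), and let 𝒫 be a non-trivial G-regular partition of Ω. Then 𝒫 has at least 3 parts and every part of 𝒫 has at least 3 elements. -/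
/-!
Let `S` be a section all of whose `G`-images are sections. If a part is a pair `{u, v}`, then
every image `{g u, g v}` is split by `S`; if there are only two parts `B` and `C`, then `S` is a
pair `{a, b}` and every image `{g a, g b}` is split by `B`. Either way the orbital graph of a pair
is bipartite with respect to a fixed set `T`, which a primitive group on at least three points
does not allow: the equivalence closure of "at distance two" is `G`-invariant and never joins the
two sides, so it is equality and every point has at most one neighbour; then "equal or adjacent"
is a `G`-invariant equivalence that is neither equality (there is an edge) nor universal (three
points would form a triangle). A singleton part `{b}` forces, by transitivity, `S = Ω`, so all
parts are singletons.
-/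

section

open Set

variable {Ω : Type*}

namespace Setoid.IsPartition

variable {P : Set (Set Ω)}

theorem eq_singleton_univ (hP : IsPartition P) (h : univ ∈ P) : P = {univ} := by
  refine eq_singleton_iff_unique_mem.2 ⟨h, fun B hB => ?_⟩
  obtain ⟨x, hx⟩ := nonempty_of_mem_partition hP hB
  exact eq_of_mem_eqv_class hP.2 hB hx h (mem_univ x)

theorem eq_range_singleton (hP : IsPartition P) (h : ∀ B ∈ P, B.Subsingleton) :
    P = range fun x : Ω => ({x} : Set Ω) := by
  ext B
  refine ⟨fun hB => ?_, ?_⟩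
  · obtain ⟨x, hx⟩ := nonempty_of_mem_partition hP hB
    exact ⟨x, ((h B hB).eq_singleton_of_mem hx).symm⟩
  · rintro ⟨x, rfl⟩
    obtain ⟨C, ⟨hC, hxC⟩, -⟩ := hP.2 x
    show {x} ∈ P
    rwa [← (h C hC).eq_singleton_of_mem hxC]

theorem exists_three_distinct (hP : IsPartition P) (hnt : ¬ IsTrivialPartition P) :
    ∃ x y z : Ω, x ≠ y ∧ x ≠ z ∧ y ≠ z := by
  have huniv : univ ∉ P := fun h => hnt (.inl (hP.eq_singleton_univ h))
  obtain ⟨B, hB, hBs⟩ : ∃ B ∈ P, ¬ B.Subsingleton := by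
    by_contra! h
    exact hnt (.inr (hP.eq_range_singleton h))
  obtain ⟨x, hx, y, hy, hxy⟩ := not_subsingleton_iff.1 hBs
  obtain ⟨z, hz⟩ := (ne_univ_iff_exists_notMem B).1 (ne_of_mem_of_not_mem hB huniv)
  exact ⟨x, y, z, hxy, ne_of_mem_of_not_mem hx hz, ne_of_mem_of_not_mem hy hz⟩

end Setoid.IsPartition

namespace IsPrimitivePermGroup

variable {G : Subgroup (Equiv.Perm Ω)}

theorem eqvGen_trivial (hG : IsPrimitivePermGroup G) {r : Ω → Ω → Prop}
    (hr : ∀ g ∈ G, ∀ x y, r x y → r (g x) (g y)) :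
    (∀ x y, Relation.EqvGen r x y → x = y) ∨ ∀ x y, Relation.EqvGen r x y := by
  let s := Relation.EqvGen.setoid r
  have hs : ∀ g ∈ G, ∀ x y, s x y → s (g x) (g y) := by
    intro g hg x y h
    induction h with
    | rel x y h => exact .rel _ _ (hr g hg x y h)
    | refl => exact .refl _
    | symm _ _ _ ih => exact .symm _ _ ih
    | trans _ _ _ _ _ ih₁ ih₂ => exact .trans _ _ _ ih₁ ih₂
  have hinv : IsInvariantPartition G s.classes := by
    rintro g hg _ ⟨y, rfl⟩
    refine ⟨g y, ext fun z => ⟨?_, fun hz => ⟨g⁻¹ z, ?_, by simp⟩⟩⟩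
    · rintro ⟨x, hx, rfl⟩
      exact hs g hg x y hx
    · simpa using hs g⁻¹ (inv_mem hg) _ _ hz
  rcases hG.2 _ (Setoid.isPartition_classes s) hinv with h | h
  · refine .inr fun x y => ?_
    have hy : {x | s x y} ∈ ({univ} : Set (Set Ω)) := h ▸ s.mem_classes y
    exact (Set.ext_iff.1 hy x).2 trivial
  · refine .inl fun x y hxy => ?_
    obtain ⟨z, hz : {z} = {x | s x y}⟩ : {x | s x y} ∈ range fun x : Ω => ({x} : Set Ω) :=
      h ▸ s.mem_classes y
    have hx : x ∈ ({z} : Set Ω) := by rw [hz]; exact hxy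
    have hy : y ∈ ({z} : Set Ω) := by rw [hz]; exact s.refl y
    exact hx.trans hy.symm

theorem eq_of_adj_of_adj (hG : IsPrimitivePermGroup G) {adj : Ω → Ω → Prop}
    (hsymm : ∀ x y, adj x y → adj y x) (hadj : ∀ g ∈ G, ∀ x y, adj x y → adj (g x) (g y))
    {T : Set Ω} (hT : ∀ x y, adj x y → (x ∈ T ↔ y ∉ T)) {a b : Ω} (hab : adj a b)
    {u v w : Ω} (huv : adj u v) (huw : adj u w) : v = w := by
  let even : Ω → Ω → Prop := fun x z => ∃ y, adj x y ∧ adj y z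
  have hevenT : ∀ x z, Relation.EqvGen even x z → (x ∈ T ↔ z ∈ T) := by
    intro x z h
    induction h with
    | rel x z h =>
      obtain ⟨y, hxy, hyz⟩ := h
      have := hT x y hxy
      have := hT y z hyz
      tauto
    | refl => rfl
    | symm _ _ _ ih => exact ih.symm
    | trans _ _ _ _ _ ih₁ ih₂ => exact ih₁.trans ih₂
  have heven : ∀ g ∈ G, ∀ x z, even x z → even (g x) (g z) := by
    rintro g hg x z ⟨y, hxy, hyz⟩
    exact ⟨g y, hadj g hg x y hxy, hadj g hg y z hyz⟩
  rcases hG.eqvGen_trivial heven with h | h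
  · exact h v w (.rel _ _ ⟨u, hsymm _ _ huv, huw⟩)
  · have := hevenT a b (h a b)
    have := hT a b hab
    tauto

theorem not_adj (hG : IsPrimitivePermGroup G) {adj : Ω → Ω → Prop}
    (hsymm : ∀ x y, adj x y → adj y x) (hadj : ∀ g ∈ G, ∀ x y, adj x y → adj (g x) (g y))
    {T : Set Ω} (hT : ∀ x y, adj x y → (x ∈ T ↔ y ∉ T)) {x y z : Ω}
    (hxy : x ≠ y) (hxz : x ≠ z) (hyz : y ≠ z) (a b : Ω) : ¬ adj a b := by
  intro hab
  have hm : Equivalence fun u v => u = v ∨ adj u v := by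
    refine ⟨fun _ => .inl rfl, ?_, ?_⟩
    · rintro u v (rfl | huv)
      exacts [.inl rfl, .inr (hsymm _ _ huv)]
    · rintro u v w (rfl | huv) (rfl | hvw)
      exacts [.inl rfl, .inr hvw, .inr huv,
        .inl (eq_of_adj_of_adj hG hsymm hadj hT hab (hsymm _ _ huv) hvw)]
  have hm' : ∀ g ∈ G, ∀ u v, (u = v ∨ adj u v) → (g u = g v ∨ adj (g u) (g v)) := by
    rintro g hg u v (rfl | huv)
    exacts [.inl rfl, .inr (hadj g hg u v huv)]
  rcases hG.eqvGen_trivial hm' with h | h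
  · have := hT a b hab
    rw [h a b (.rel _ _ (.inr hab))] at this
    tauto
  · have adj_of_ne : ∀ u v, u ≠ v → adj u v := fun u v huv =>
      (((hm.eqvGen_iff).1 (h u v)).resolve_left huv)
    have := hT x y (adj_of_ne x y hxy)
    have := hT x z (adj_of_ne x z hxz)
    have := hT y z (adj_of_ne y z hyz)
    tauto

theorem exists_mem_iff_mem (hG : IsPrimitivePermGroup G) {x y z : Ω}
    (hxy : x ≠ y) (hxz : x ≠ z) (hyz : y ≠ z) (T : Set Ω) (a b : Ω) : ∃ g ∈ G, (g a ∈ T ↔ g b ∈ T) := by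
  by_contra! h
  let adj : Ω → Ω → Prop := fun u v => ∃ g ∈ G, g a = u ∧ g b = v ∨ g a = v ∧ g b = u
  refine hG.not_adj (adj := adj) ?_ ?_ (T := T) ?_ hxy hxz hyz a b ⟨1, one_mem G, .inl ⟨rfl, rfl⟩⟩
  · rintro u v ⟨g, hg, h | h⟩
    exacts [⟨g, hg, .inr h⟩, ⟨g, hg, .inl h⟩]
  · rintro k hk u v ⟨g, hg, ⟨rfl, rfl⟩ | ⟨rfl, rfl⟩⟩
    exacts [⟨k * g, mul_mem hk hg, .inl ⟨rfl, rfl⟩⟩, ⟨k * g, mul_mem hk hg, .inr ⟨rfl, rfl⟩⟩]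
  · rintro u v ⟨g, hg, ⟨rfl, rfl⟩ | ⟨rfl, rfl⟩⟩
    all_goals have := h g hg; tauto

end IsPrimitivePermGroup

namespace IsSection

variable {P : Set (Set Ω)} {S : Set Ω}

theorem eq_of_mem (hS : IsSection P S) {B : Set Ω} (hB : B ∈ P) {x y : Ω}
    (hx : x ∈ S) (hxB : x ∈ B) (hy : y ∈ S) (hyB : y ∈ B) : x = y :=
  (hS B hB).unique ⟨hx, hxB⟩ ⟨hy, hyB⟩

theorem mem_iff_notMem_of_pair_mem (hS : IsSection P S) {u v : Ω} (huv : u ≠ v)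
    (h : {u, v} ∈ P) : u ∈ S ↔ v ∉ S := by
  refine ⟨fun hu hv => huv (hS.eq_of_mem h hu (by simp) hv (by simp)), fun hv => ?_⟩
  obtain ⟨w, ⟨hwS, rfl | rfl⟩, -⟩ := hS _ h
  exacts [hwS, absurd hwS hv]

theorem mem_iff_notMem_of_eq_pair (hP : Setoid.IsPartition P) (hS : IsSection P S)
    {B C : Set Ω} (hBC : P = {B, C}) {u v : Ω} (huv : u ≠ v) (hu : u ∈ S) (hv : v ∈ S) :
    u ∈ B ↔ v ∉ B := by
  have hB : B ∈ P := hBC ▸ mem_insert B {C}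
  have hC : C ∈ P := hBC ▸ mem_insert_of_mem B rfl
  have mem_C : ∀ x, x ∉ B → x ∈ C := fun x hx => by
    obtain ⟨D, ⟨hD, hxD⟩, -⟩ := hP.2 x
    rw [hBC] at hD
    rcases hD with rfl | rfl
    exacts [absurd hxD hx, hxD]
  refine ⟨fun huB hvB => huv (hS.eq_of_mem hB hu huB hv hvB), fun hvB => ?_⟩
  by_contra huB
  exact huv (hS.eq_of_mem hC hu (mem_C u huB) hv (mem_C v hvB))

end IsSection

theorem IsTransitivePermGroup.eq_univ_of_singleton_mem {G : Subgroup (Equiv.Perm Ω)}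
    (hG : IsTransitivePermGroup G) {P : Set (Set Ω)} {S : Set Ω}
    (hS : ∀ g ∈ G, IsSection P (g '' S)) {b : Ω} (hb : {b} ∈ P) : S = univ := by
  refine eq_univ_of_forall fun y => ?_
  obtain ⟨g, hg, rfl⟩ := hG y b
  obtain ⟨w, ⟨⟨s, hs, rfl⟩, hw⟩, -⟩ := hS g hg _ hb
  rwa [g.injective hw] at hs

namespace IsPrimitivePermGroup

variable [Finite Ω] {G : Subgroup (Equiv.Perm Ω)} {P : Set (Set Ω)}

theorem three_le_ncard_of_mem (hG : IsPrimitivePermGroup G) (hP : Setoid.IsPartition P)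
    (hreg : IsGRegular G P) (hnt : ¬ IsTrivialPartition P) {B : Set Ω} (hB : B ∈ P) :
    3 ≤ B.ncard := by
  obtain ⟨S, hS, hSg⟩ := hreg
  obtain ⟨x, y, z, hxy, hxz, hyz⟩ := hP.exists_three_distinct hnt
  by_contra! hlt
  obtain h | h | h : B.ncard = 0 ∨ B.ncard = 1 ∨ B.ncard = 2 := by omega
  · exact (Setoid.nonempty_of_mem_partition hP hB).ne_empty ((ncard_eq_zero (s := B)).1 h)
  · obtain ⟨b, rfl⟩ := ncard_eq_one.1 h
    have hSu := hG.1.eq_univ_of_singleton_mem hSg hB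
    refine hnt (.inr (hP.eq_range_singleton fun C hC u hu v hv => ?_))
    exact hS.eq_of_mem hC (hSu ▸ mem_univ u) hu (hSu ▸ mem_univ v) hv
  · obtain ⟨u, v, huv, rfl⟩ := ncard_eq_two.1 h
    obtain ⟨g, hg, hguv⟩ := hG.exists_mem_iff_mem hxy hxz hyz S u v
    have := (hSg g⁻¹ (inv_mem hg)).mem_iff_notMem_of_pair_mem huv hB
    simp only [mem_image_equiv] at this
    tauto

theorem three_le_ncard (hG : IsPrimitivePermGroup G) (hP : Setoid.IsPartition P)
    (hreg : IsGRegular G P) (hnt : ¬ IsTrivialPartition P) : 3 ≤ P.ncard := by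
  obtain ⟨S, hS, hSg⟩ := hreg
  obtain ⟨x, y, z, hxy, hxz, hyz⟩ := hP.exists_three_distinct hnt
  by_contra! hlt
  obtain h | h | h : P.ncard = 0 ∨ P.ncard = 1 ∨ P.ncard = 2 := by omega
  · obtain ⟨B, ⟨hB, -⟩, -⟩ := hP.2 x
    rw [(ncard_eq_zero (s := P)).1 h] at hB
    exact hB
  · obtain ⟨B, rfl⟩ := ncard_eq_one.1 h
    have hB : B = univ := by simpa using hP.sUnion_eq_univ
    exact hnt (.inl (hB ▸ rfl))
  · obtain ⟨B, C, hBC, hP₂⟩ := ncard_eq_two.1 h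
    have hB : B ∈ P := hP₂ ▸ mem_insert B {C}
    have hC : C ∈ P := hP₂ ▸ mem_insert_of_mem B rfl
    obtain ⟨a, ⟨haS, haB⟩, -⟩ := hS B hB
    obtain ⟨b, ⟨hbS, hbC⟩, -⟩ := hS C hC
    have hab : a ≠ b := by
      rintro rfl
      exact hBC (Setoid.eq_of_mem_eqv_class hP.2 hB haB hC hbC)
    obtain ⟨g, hg, hgab⟩ := hG.exists_mem_iff_mem hxy hxz hyz B a b
    have := (hSg g hg).mem_iff_notMem_of_eq_pair hP hP₂ (g.injective.ne hab)
      (mem_image_of_mem g haS) (mem_image_of_mem g hbS)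
    tauto

end IsPrimitivePermGroup

end

/-- A non-trivial `G`-regular partition for a primitive group has at least 3 parts,
each of size at least 3. -/
theorem stmt1 {Ω : Type*} [Finite Ω] (G : Subgroup (Equiv.Perm Ω))
    (hG : IsPrimitivePermGroup G) (P : Set (Set Ω)) (hP : Setoid.IsPartition P)
    (hreg : IsGRegular G P) (hnt : ¬ IsTrivialPartition P) :
    3 ≤ P.ncard ∧ ∀ B ∈ P, 3 ≤ B.ncard :=
  ⟨hG.three_le_ncard hP hreg hnt, fun _ hB => hG.three_le_ncard_of_mem hP hreg hnt hB⟩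
end

section
/- Let G be a primitive subgroup of Sym(Ω) for a finite set Ω. If G preserves a cartesian decomposition of Ω (i.e., there is a cartesian decomposition Σ of Ω such that 𝒫g ∈ Σ for every 𝒫 ∈ Σ and g ∈ G, where g acts on a partition by acting on each of its parts), then G is non-synchronizing. -/
/-!
Fix a partition `P₀` in the cartesian decomposition `𝒮` and, for each `P ∈ 𝒮` with as many
blocks as `P₀`, a bijection between the blocks of `P` and those of `P₀`. For a block `B` of `P₀`,
choosing the block matching `B` in each such `P` (and any block elsewhere) picks out a single point
`x_B` of `Ω`, and `S = {x_B}` is a common section of all these partitions. Since `G` permutes `𝒮`,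
`P₀g⁻¹` is one of them, so `Sg` is a section of `P₀` for every `g ∈ G`: the non-trivial partition
`P₀` is `G`-regular.
-/

lemma IsSection.image {α β : Type*} {P : Set (Set α)} {S : Set α} (hS : IsSection P S)
    {f : α → β} (hf : Function.Injective f) : IsSection ((fun B => f '' B) '' P) (f '' S) := by
  rintro _ ⟨B, hB, rfl⟩
  obtain ⟨x, ⟨hxS, hxB⟩, huniq⟩ := hS B hB
  refine ⟨f x, ⟨Set.mem_image_of_mem f hxS, Set.mem_image_of_mem f hxB⟩, ?_⟩
  rintro _ ⟨⟨y, hyS, rfl⟩, hyB⟩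
  rw [hf.mem_set_image] at hyB
  rw [huniq y ⟨hyS, hyB⟩]

section Cartesian

variable {Ω : Type*} {𝒮 : Set (Set (Set Ω))}

lemma nonempty_of_cartesian [Nontrivial Ω]
    (hcart : ∀ c : Set (Set Ω) → Set Ω, (∀ Q ∈ 𝒮, c Q ∈ Q) → (⋂ Q ∈ 𝒮, c Q).ncard = 1) :
    𝒮.Nonempty := by
  rw [Set.nonempty_iff_ne_empty]
  rintro rfl
  have hcard := hcart (fun _ => ∅) (by simp)
  simp only [Set.mem_empty_iff_false, Set.iInter_of_empty, Set.iInter_univ, Set.ncard_univ,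
    Nat.card_eq_one_iff_unique] at hcard
  exact not_subsingleton Ω hcard.1

lemma exists_forall_mem_of_cartesian
    (hcart : ∀ c : Set (Set Ω) → Set Ω, (∀ Q ∈ 𝒮, c Q ∈ Q) → (⋂ Q ∈ 𝒮, c Q).ncard = 1)
    (hne : ∀ Q ∈ 𝒮, Q.Nonempty) {𝒯 : Set (Set (Set Ω))} (h𝒯 : 𝒯 ⊆ 𝒮)
    (c : Set (Set Ω) → Set Ω) (hc : ∀ Q ∈ 𝒯, c Q ∈ Q) : ∃ x, ∀ Q ∈ 𝒯, x ∈ c Q := by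
  classical
  let c' : Set (Set Ω) → Set Ω := fun Q =>
    if Q ∈ 𝒯 then c Q else if h : Q.Nonempty then h.some else ∅
  have hc' : ∀ Q ∈ 𝒮, c' Q ∈ Q := fun Q hQ => by
    by_cases hQ𝒯 : Q ∈ 𝒯
    · simpa [c', hQ𝒯] using hc Q hQ𝒯
    · simpa [c', hQ𝒯, hne Q hQ] using (hne Q hQ).some_mem
  obtain ⟨x, hx⟩ := Set.ncard_eq_one.mp (hcart c' hc')
  refine ⟨x, fun Q hQ => ?_⟩
  have hmem : x ∈ ⋂ Q ∈ 𝒮, c' Q := hx ▸ rfl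
  simpa [c', hQ] using Set.mem_iInter₂.mp hmem Q (h𝒯 hQ)

theorem exists_isSection_of_cartesian [Nonempty Ω]
    (hpart : ∀ Q ∈ 𝒮, Setoid.IsPartition Q)
    (hcart : ∀ c : Set (Set Ω) → Set Ω, (∀ Q ∈ 𝒮, c Q ∈ Q) → (⋂ Q ∈ 𝒮, c Q).ncard = 1)
    (ι : Type*) : ∃ S, ∀ Q ∈ 𝒮, Nonempty (Q ≃ ι) → IsSection Q S := by
  classical
  have hne : ∀ Q ∈ 𝒮, Q.Nonempty := fun Q hQ =>
    let ⟨B, ⟨hB, _⟩, _⟩ := (hpart Q hQ).2 (Classical.arbitrary Ω)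
    ⟨B, hB⟩
  have hdiag : ∀ i : ι, ∃ x, ∀ Q ∈ {Q ∈ 𝒮 | Nonempty (Q ≃ ι)},
      x ∈ if h : Nonempty (Q ≃ ι) then ((Classical.choice h).symm i : Set Ω) else ∅ :=
    fun i => exists_forall_mem_of_cartesian hcart hne (Set.sep_subset _ _) _
      fun Q ⟨_, h⟩ => by simp [h]
  choose x hx using hdiag
  refine ⟨Set.range x, fun Q hQ h C hC => ?_⟩
  set e : Q ≃ ι := Classical.choice h
  have hxe : ∀ i, x i ∈ (e.symm i : Set Ω) := fun i => by simpa [h] using hx i Q ⟨hQ, h⟩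
  refine ⟨x (e ⟨C, hC⟩), ⟨⟨_, rfl⟩, by simpa using hxe (e ⟨C, hC⟩)⟩, ?_⟩
  rintro _ ⟨⟨i, rfl⟩, hiC⟩
  have hblock : e.symm i = ⟨C, hC⟩ :=
    Subtype.ext (Setoid.eq_of_mem_eqv_class (hpart Q hQ).2 (e.symm i).2 (hxe i) hC hiC)
  rw [← hblock, Equiv.apply_symm_apply]

end Cartesian

theorem stmt2_general {Ω : Type*} (G : Subgroup (Equiv.Perm Ω))
    (𝒮 : Set (Set (Set Ω)))
    (hparts : ∀ Q ∈ 𝒮, Setoid.IsPartition Q ∧ ¬ IsTrivialPartition Q)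
    (hcart : ∀ c : Set (Set Ω) → Set Ω, (∀ Q ∈ 𝒮, c Q ∈ Q) →
      (⋂ Q ∈ 𝒮, c Q).ncard = 1)
    (hinv : ∀ g ∈ G, ∀ Q ∈ 𝒮, (fun B => (⇑g) '' B) '' Q ∈ 𝒮) :
    ¬ IsSynchronizing G := by
  rintro ⟨hbot, hsync⟩
  have : Nontrivial Ω := by
    by_contra h
    rw [not_nontrivial_iff_subsingleton] at h
    exact hbot (Subgroup.eq_bot_of_subsingleton G)
  obtain ⟨Q₀, hQ₀⟩ := nonempty_of_cartesian hcart
  obtain ⟨S, hS⟩ := exists_isSection_of_cartesian (fun Q hQ => (hparts Q hQ).1) hcart Q₀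
  refine (hparts Q₀ hQ₀).2 (hsync Q₀ (hparts Q₀ hQ₀).1 ⟨S, hS Q₀ hQ₀ ⟨.refl _⟩, fun g hg => ?_⟩)
  have hQ : (fun B => ⇑g⁻¹ '' B) '' Q₀ ∈ 𝒮 := hinv _ (inv_mem hg) Q₀ hQ₀
  have hequiv : (fun B => ⇑g⁻¹ '' B) '' Q₀ ≃ Q₀ :=
    (Equiv.Set.image _ Q₀ (Set.image_injective.mpr g⁻¹.injective)).symm
  simpa [Set.image_image] using (hS _ hQ ⟨hequiv⟩).image g.injective

/-- A primitive group preserving a cartesian decomposition is non-synchronizing. -/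
theorem stmt2 {Ω : Type*} [Finite Ω] (G : Subgroup (Equiv.Perm Ω))
    (hG : IsPrimitivePermGroup G) (𝒮 : Set (Set (Set Ω))) (hfin : 𝒮.Finite)
    (hparts : ∀ Q ∈ 𝒮, Setoid.IsPartition Q ∧ ¬ IsTrivialPartition Q)
    (hcart : ∀ c : Set (Set Ω) → Set Ω, (∀ Q ∈ 𝒮, c Q ∈ Q) →
      (⋂ Q ∈ 𝒮, c Q).ncard = 1)
    (hinv : ∀ g ∈ G, ∀ Q ∈ 𝒮, (fun B => (⇑g) '' B) '' Q ∈ 𝒮) :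
    ¬ IsSynchronizing G :=
  stmt2_general G 𝒮 hparts hcart hinv
end

section
/- Let q = p^d be an odd prime power with p prime, let m divide q − 1, and set r = (q−1)/m. Then G_{q,m} is a primitive permutation group on 𝔽_q if and only if r does not divide p^i − 1 for every i with 1 ≤ i ≤ d − 1. -/
/-- The set `S_{q,m}` of `m`-th powers of nonzero elements of a field. -/
def mthPowers (F : Type*) [Field F] (m : ℕ) : Set F :=
  {x : F | ∃ a : F, a ≠ 0 ∧ a ^ m = x}

/-- The group `G_{q,m} ≤ Sym(F)`, generated by all translations `x ↦ x + α` and the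
multiplications `x ↦ x * α` for `α ∈ S_{q,m}`. -/
def Gqm (F : Type*) [Field F] (m : ℕ) : Subgroup (Equiv.Perm F) :=
  Subgroup.closure
    ((Set.range fun a : F => Equiv.addRight a) ∪
      {e : Equiv.Perm F | ∃ (a : F) (ha : a ≠ 0), a ∈ mthPowers F m ∧ e = Equiv.mulRight₀ a ha})

/-!
Every element of `G_{q,m}` is an affine map `x ↦ x * c + t` with `c ∈ S_{q,m}`, and `G_{q,m}`
contains all translations. Hence the block through `0` of a `G_{q,m}`-invariant partition is an
additive subgroup stable under multiplication by `S_{q,m}`, i.e. a vector space over the subfield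
`K` generated by `S_{q,m}`; conversely the cosets of `K` form an invariant partition. So `G_{q,m}`
is primitive iff `K = 𝔽_q`. Now `S_{q,m}` is the cyclic group of `r`-th roots of unity: if
`r ∣ p^i - 1` then `S_{q,m}` lies in the field of fixed points of `x ↦ x^(p^i)`, which is proper
for `i < d`; and if `K = 𝔽_{p^k}` is proper, a generator of `S_{q,m}` lies in `Kˣ`, so
`r ∣ p^k - 1`.
-/

section Partitions

variable {Ω : Type*} {G : Subgroup (Equiv.Perm Ω)} {P : Set (Set Ω)}

theorem IsInvariantPartition.image_eq_of_mem (hInv : IsInvariantPartition G P)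
    (hP : Setoid.IsPartition P) {g : Equiv.Perm Ω} (hg : g ∈ G) {B : Set Ω} (hB : B ∈ P)
    {x : Ω} (hx : x ∈ B) (hgx : g x ∈ B) : (⇑g) '' B = B :=
  Setoid.eq_of_mem_eqv_class hP.2 (hInv g hg B hB) ⟨x, hx, rfl⟩ hB hgx

theorem Setoid.IsPartition.eq_singleton_univ_s4 (hP : Setoid.IsPartition P)
    (huniv : Set.univ ∈ P) : P = {Set.univ} := by
  refine Set.eq_singleton_iff_unique_mem.2 ⟨huniv, fun C hC => ?_⟩
  obtain ⟨x, hx⟩ := Set.nonempty_iff_ne_empty.2 fun h => hP.1 (h ▸ hC)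
  exact Setoid.eq_of_mem_eqv_class hP.2 hC hx huniv trivial

theorem IsInvariantPartition.eq_range_singleton (hInv : IsInvariantPartition G P)
    (hG : IsTransitivePermGroup G) (hP : Setoid.IsPartition P) {x : Ω} (hx : {x} ∈ P) :
    P = Set.range fun y : Ω => ({y} : Set Ω) := by
  have hblock : ∀ C ∈ P, ∀ c ∈ C, C = {c} := by
    intro C hC c hc
    obtain ⟨g, hg, rfl⟩ := hG c x
    have : (⇑g) '' C = (⇑g) '' {c} := by
      rw [Set.image_singleton]
      exact Setoid.eq_of_mem_eqv_class hP.2 (hInv g hg C hC) ⟨c, hc, rfl⟩ hx rfl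
    exact Set.image_injective.2 g.injective this
  ext C
  constructor
  · intro hC
    obtain ⟨c, hc⟩ := Set.nonempty_iff_ne_empty.2 fun h => hP.1 (h ▸ hC)
    exact ⟨c, (hblock C hC c hc).symm⟩
  · rintro ⟨y, rfl⟩
    obtain ⟨C, ⟨hC, hyC⟩, -⟩ := hP.2 y
    show {y} ∈ P
    rwa [← hblock C hC y hyC]

theorem IsPrimitivePermGroup.setoid_eq_top_or_eq_bot (hG : IsPrimitivePermGroup G)
    (r : Setoid Ω) (hr : ∀ g ∈ G, ∀ x y, r (g x) (g y) ↔ r x y) : r = ⊤ ∨ r = ⊥ := by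
  have hInv : IsInvariantPartition G r.classes := by
    rintro g hg _ ⟨y, rfl⟩
    refine ⟨g y, Set.ext fun z => ⟨?_, fun hz => ⟨g.symm z, ?_, g.apply_symm_apply z⟩⟩⟩
    · rintro ⟨x, hx, rfl⟩
      exact (hr g hg x y).2 hx
    · show r (g.symm z) y
      rwa [← hr g hg, g.apply_symm_apply]
  rcases hG.2 _ (Setoid.isPartition_classes r) hInv with h | h
  · refine .inl (Setoid.eq_top_iff.2 fun x y => ?_)
    have hy : {x | r x y} ∈ r.classes := r.mem_classes y
    rw [h, Set.mem_singleton_iff] at hy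
    have hx : x ∈ {x | r x y} := hy ▸ Set.mem_univ x
    exact hx
  · refine .inr (le_bot_iff.1 (Setoid.le_def.2 fun {x y} hxy => ?_))
    obtain ⟨z, hz⟩ : {x | r x y} ∈ Set.range fun z : Ω => ({z} : Set Ω) := h ▸ r.mem_classes y
    have hmem := fun a => (Set.ext_iff.1 hz a).2
    exact ((hmem x hxy).trans (hmem y (r.refl y)).symm : x = y)

end Partitions

theorem Subgroup.forall_rel_iff_of_mem_closure {Ω : Type*} {s : Set (Equiv.Perm Ω)}
    {R : Ω → Ω → Prop} (hs : ∀ g ∈ s, ∀ x y, R (g x) (g y) ↔ R x y) {g : Equiv.Perm Ω}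
    (hg : g ∈ Subgroup.closure s) : ∀ x y, R (g x) (g y) ↔ R x y := by
  induction hg using Subgroup.closure_induction with
  | mem g hg => exact hs g hg
  | one => exact fun _ _ => Iff.rfl
  | mul g h _ _ hg hh => exact fun x y => (hg (h x) (h y)).trans (hh x y)
  | inv g _ hg =>
    intro x y
    rw [← hg, ← Equiv.Perm.mul_apply, ← Equiv.Perm.mul_apply, mul_inv_cancel,
      Equiv.Perm.one_apply, Equiv.Perm.one_apply]

theorem Subring.inv_mem_of_finite {F : Type*} [Field F] [Finite F] (T : Subring F) {c : F}
    (hc : c ∈ T) : c⁻¹ ∈ T := by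
  cases nonempty_fintype F
  rcases eq_or_ne c 0 with rfl | hc0
  · rw [inv_zero]
    exact T.zero_mem
  have hcard : 2 ≤ Fintype.card F := Fintype.one_lt_card
  have hinv : c⁻¹ = c ^ (Fintype.card F - 2) := by
    refine inv_eq_of_mul_eq_one_right ?_
    rw [← pow_succ', show Fintype.card F - 2 + 1 = Fintype.card F - 1 by omega]
    exact FiniteField.pow_card_sub_one_eq_one c hc0
  rw [hinv]
  exact T.pow_mem hc _

section MulStabilizer

variable {F : Type*} [Field F] [Finite F]

def AddSubgroup.mulStabilizer (B : AddSubgroup F) : Subfield F :=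
  Subring.toSubfield
    { carrier := {c | ∀ b ∈ B, b * c ∈ B}
      mul_mem' := fun {c c'} hc hc' b hb => by
        rw [← mul_assoc]
        exact hc' _ (hc b hb)
      one_mem' := fun b hb => by rwa [mul_one]
      add_mem' := fun {c c'} hc hc' b hb => by
        rw [mul_add]
        exact B.add_mem (hc b hb) (hc' b hb)
      zero_mem' := fun b _ => by
        rw [mul_zero]
        exact B.zero_mem
      neg_mem' := fun {c} hc b hb => by
        rw [mul_neg]
        exact B.neg_mem (hc b hb) }
    fun _ => Subring.inv_mem_of_finite _

theorem AddSubgroup.eq_bot_or_eq_top_of_mul_mem (B : AddSubgroup F) {S : Set F}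
    (hS : Subfield.closure S = ⊤) (hB : ∀ s ∈ S, ∀ b ∈ B, b * s ∈ B) : B = ⊥ ∨ B = ⊤ := by
  have hmul : ∀ c, ∀ b ∈ B, b * c ∈ B := fun c =>
    (hS ▸ Subfield.closure_le.2 hB : ⊤ ≤ B.mulStabilizer) (Subfield.mem_top c)
  refine B.bot_or_exists_ne_zero.imp_right fun ⟨b, hb, hb0⟩ => ?_
  refine (AddSubgroup.eq_top_iff' B).2 fun x => ?_
  simpa [hb0] using hmul (b⁻¹ * x) b hb

end MulStabilizer

section Gqm

variable {F : Type*} [Field F] {m : ℕ}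

theorem ne_zero_of_mem_mthPowers {s : F} (hs : s ∈ mthPowers F m) : s ≠ 0 := by
  obtain ⟨a, ha, rfl⟩ := hs
  exact pow_ne_zero m ha

theorem addRight_mem_Gqm (a : F) : Equiv.addRight a ∈ Gqm F m :=
  Subgroup.subset_closure (.inl ⟨a, rfl⟩)

theorem mulRight₀_mem_Gqm {s : F} (hs : s ∈ mthPowers F m) :
    Equiv.mulRight₀ s (ne_zero_of_mem_mthPowers hs) ∈ Gqm F m :=
  Subgroup.subset_closure (.inr ⟨s, _, hs, rfl⟩)

theorem isTransitivePermGroup_Gqm : IsTransitivePermGroup (Gqm F m) :=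
  fun a b => ⟨Equiv.addRight (b - a), addRight_mem_Gqm _, add_sub_cancel a b⟩

theorem neg_add_mem_iff_of_mem_Gqm {K : Subfield F} (hK : mthPowers F m ⊆ K)
    {g : Equiv.Perm F} (hg : g ∈ Gqm F m) (x y : F) : -g x + g y ∈ K ↔ -x + y ∈ K := by
  refine Subgroup.forall_rel_iff_of_mem_closure (R := fun x y => -x + y ∈ K) ?_ hg x y
  rintro _ (⟨a, rfl⟩ | ⟨s, hs0, hs, rfl⟩) x y
  · show -(x + a) + (y + a) ∈ K ↔ -x + y ∈ K
    rw [show -(x + a) + (y + a) = -x + y by abel]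
  · have hsK : s ∈ K := hK hs
    show -(x * s) + y * s ∈ K ↔ -x + y ∈ K
    rw [show -(x * s) + y * s = (-x + y) * s by ring]
    exact ⟨fun h => by simpa [hs0] using K.mul_mem h (K.inv_mem hsK),
      fun h => K.mul_mem h hsK⟩

theorem closure_mthPowers_eq_top_of_isPrimitivePermGroup (h : IsPrimitivePermGroup (Gqm F m)) :
    Subfield.closure (mthPowers F m) = ⊤ := by
  set K := Subfield.closure (mthPowers F m)
  have hr : ∀ g ∈ Gqm F m, ∀ x y, QuotientAddGroup.leftRel K.toAddSubgroup (g x) (g y) ↔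
      QuotientAddGroup.leftRel K.toAddSubgroup x y := fun g hg x y => by
    rw [QuotientAddGroup.leftRel_apply, QuotientAddGroup.leftRel_apply]
    exact neg_add_mem_iff_of_mem_Gqm Subfield.subset_closure hg x y
  rcases h.setoid_eq_top_or_eq_bot _ hr with htop | hbot
  · refine eq_top_iff.2 fun z _ => ?_
    simpa [QuotientAddGroup.leftRel_apply] using Setoid.eq_top_iff.1 htop 0 z
  · have h01 : QuotientAddGroup.leftRel K.toAddSubgroup 0 1 := by
      rw [QuotientAddGroup.leftRel_apply, neg_zero, zero_add]
      exact K.one_mem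
    rw [hbot] at h01
    exact absurd h01 zero_ne_one

theorem isPrimitivePermGroup_Gqm_of_closure_eq_top [Finite F]
    (hS : Subfield.closure (mthPowers F m) = ⊤) : IsPrimitivePermGroup (Gqm F m) := by
  refine ⟨isTransitivePermGroup_Gqm, fun P hP hInv => ?_⟩
  obtain ⟨B, ⟨hBP, hB0⟩, -⟩ := hP.2 0
  have hfix : ∀ g ∈ Gqm F m, g 0 ∈ B → (⇑g) '' B = B := fun g hg =>
    hInv.image_eq_of_mem hP hg hBP hB0
  have hadd : ∀ a ∈ B, ∀ b ∈ B, b + a ∈ B := fun a ha b hb => by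
    rw [← hfix _ (addRight_mem_Gqm a) (by simpa using ha)]
    exact ⟨b, hb, rfl⟩
  have hneg : ∀ a ∈ B, -a ∈ B := fun a ha => by
    rw [← hfix _ (addRight_mem_Gqm a) (by simpa using ha)] at hB0
    obtain ⟨b, hb, hba⟩ := hB0
    have hb_eq : b = -a := eq_neg_of_add_eq_zero_left hba
    rwa [← hb_eq]
  have hmul : ∀ s ∈ mthPowers F m, ∀ b ∈ B, b * s ∈ B := fun s hs b hb => by
    rw [← hfix _ (mulRight₀_mem_Gqm hs) (by simpa using hB0)]
    exact ⟨b, hb, rfl⟩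
  let B' : AddSubgroup F :=
    { carrier := B
      add_mem' := fun ha hb => hadd _ hb _ ha
      zero_mem' := hB0
      neg_mem' := hneg _ }
  rcases B'.eq_bot_or_eq_top_of_mul_mem hS hmul with hbot | htop
  · have hB : B = {0} := congrArg SetLike.coe hbot
    exact .inr (hInv.eq_range_singleton isTransitivePermGroup_Gqm hP (hB ▸ hBP))
  · have hB : B = Set.univ := congrArg SetLike.coe htop
    exact .inl (hP.eq_singleton_univ_s4 (hB ▸ hBP))

theorem isPrimitivePermGroup_Gqm_iff [Finite F] :
    IsPrimitivePermGroup (Gqm F m) ↔ Subfield.closure (mthPowers F m) = ⊤ :=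
  ⟨closure_mthPowers_eq_top_of_isPrimitivePermGroup, isPrimitivePermGroup_Gqm_of_closure_eq_top⟩

end Gqm

section RootsOfUnity

variable {F : Type*} [Field F] [Fintype F] {m : ℕ}

theorem pow_eq_one_of_mem_mthPowers (hm : m ∣ Fintype.card F - 1) {s : F}
    (hs : s ∈ mthPowers F m) : s ^ ((Fintype.card F - 1) / m) = 1 := by
  obtain ⟨a, ha, rfl⟩ := hs
  rw [← pow_mul, Nat.mul_div_cancel' hm, FiniteField.pow_card_sub_one_eq_one a ha]

theorem exists_mem_mthPowers_orderOf_eq (hm : m ∣ Fintype.card F - 1) :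
    ∃ s ∈ mthPowers F m, orderOf s = (Fintype.card F - 1) / m := by
  obtain ⟨ζ, hζ⟩ := IsCyclic.exists_ofOrder_eq_natCard (α := Fˣ)
  rw [Nat.card_units, Nat.card_eq_fintype_card] at hζ
  have hm0 : m ≠ 0 := by
    rintro rfl
    have := Fintype.one_lt_card (α := F)
    omega
  refine ⟨(ζ : F) ^ m, ⟨ζ, ζ.ne_zero, rfl⟩, ?_⟩
  rw [← Units.val_pow_eq_pow_val, orderOf_units, orderOf_pow_of_dvd hm0 (hζ ▸ hm), hζ]

end RootsOfUnity

section PrimePowerField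

variable {F : Type*} [Field F] [Fintype F] {m p d : ℕ}

theorem closure_mthPowers_ne_top_of_dvd (hp : p.Prime) (hF : Fintype.card F = p ^ d)
    (hm : m ∣ p ^ d - 1) {i : ℕ} (hi : 1 ≤ i) (hid : i < d)
    (hdvd : (p ^ d - 1) / m ∣ p ^ i - 1) : Subfield.closure (mthPowers F m) ≠ ⊤ := by
  intro htop
  have : Fact p.Prime := ⟨hp⟩
  have : CharP F p := charP_of_card_eq_prime_pow hF
  have hpi : 1 ≤ p ^ i := Nat.one_le_pow _ _ hp.pos
  have hfrob : iterateFrobenius F p i = RingHom.id F := by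
    refine RingHom.eq_of_eqOn_of_field_closure_eq_top htop fun s hs => ?_
    obtain ⟨k, hk⟩ := hdvd
    have hs1 : s ^ (p ^ i - 1) = 1 := by
      rw [hk, pow_mul, ← hF, pow_eq_one_of_mem_mthPowers (hF ▸ hm) hs, one_pow]
    rw [iterateFrobenius_def, RingHom.id_apply, ← Nat.sub_add_cancel hpi, pow_succ, hs1, one_mul]
  have hexp : Monoid.exponent Fˣ ∣ p ^ i - 1 := by
    refine Monoid.exponent_dvd_of_forall_pow_eq_one fun u => Units.ext ?_
    have hu : (u : F) ^ p ^ i = u := by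
      simpa [iterateFrobenius_def] using congrArg (· (u : F)) hfrob
    rw [Units.val_pow_eq_pow_val, Units.val_one]
    refine mul_right_cancel₀ u.ne_zero ?_
    rw [← pow_succ, Nat.sub_add_cancel hpi, hu, one_mul]
  rw [IsCyclic.exponent_eq_card, Nat.card_units, Nat.card_eq_fintype_card, hF] at hexp
  have hlt : p ^ i < p ^ d := Nat.pow_lt_pow_right hp.one_lt hid
  have hpos : 0 < p ^ i - 1 := Nat.sub_pos_of_lt (Nat.one_lt_pow (by omega) hp.one_lt)
  have := Nat.le_of_dvd hpos hexp
  omega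

theorem exists_dvd_of_closure_mthPowers_ne_top (hp : p.Prime) (hF : Fintype.card F = p ^ d)
    (hm : m ∣ p ^ d - 1) (hK : Subfield.closure (mthPowers F m) ≠ ⊤) :
    ∃ i, 1 ≤ i ∧ i ≤ d - 1 ∧ (p ^ d - 1) / m ∣ p ^ i - 1 := by
  set K := Subfield.closure (mthPowers F m)
  have hdvd : Nat.card K ∣ p ^ d := by
    rw [← hF, ← Nat.card_eq_fintype_card]
    exact AddSubgroup.card_addSubgroup_dvd_card K.toAddSubgroup
  obtain ⟨k, hkd, hk⟩ := (Nat.dvd_prime_pow hp).1 hdvd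
  have hk0 : k ≠ 0 := by
    rintro rfl
    have := Finite.one_lt_card (α := K)
    rw [hk, pow_zero] at this
    exact lt_irrefl 1 this
  have hkd' : k ≠ d := by
    rintro rfl
    refine hK (eq_top_iff.2 fun x _ => ?_)
    have htop := AddSubgroup.eq_top_of_card_eq K.toAddSubgroup
      (by rw [Nat.card_eq_fintype_card (α := F), hF]; exact hk)
    exact (htop ▸ AddSubgroup.mem_top x : x ∈ K.toAddSubgroup)
  obtain ⟨s, hs, hord⟩ := exists_mem_mthPowers_orderOf_eq (hF ▸ hm)
  have : Fintype K := Fintype.ofFinite K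
  have hsK : (⟨s, Subfield.subset_closure hs⟩ : K) ^ (Fintype.card K - 1) = 1 :=
    FiniteField.pow_card_sub_one_eq_one _ fun h =>
      ne_zero_of_mem_mthPowers hs (congrArg Subtype.val h)
  refine ⟨k, by omega, by omega, ?_⟩
  rw [← hF, ← hord, ← hk, Nat.card_eq_fintype_card]
  exact orderOf_dvd_of_pow_eq_one (by simpa using congrArg Subtype.val hsK)

theorem closure_mthPowers_eq_top_iff (hp : p.Prime) (hF : Fintype.card F = p ^ d)
    (hm : m ∣ p ^ d - 1) : Subfield.closure (mthPowers F m) = ⊤ ↔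
      ∀ i, 1 ≤ i → i ≤ d - 1 → ¬ (p ^ d - 1) / m ∣ p ^ i - 1 := by
  constructor
  · intro htop i hi hid hdvd
    exact closure_mthPowers_ne_top_of_dvd hp hF hm hi (by omega) hdvd htop
  · intro h
    by_contra hK
    obtain ⟨i, hi, hid, hdvd⟩ := exists_dvd_of_closure_mthPowers_ne_top hp hF hm hK
    exact h i hi hid hdvd

end PrimePowerField

theorem stmt4_general (p d q m r : ℕ) (hp : p.Prime) (hq : q = p ^ d)
    (hm : m ∣ q - 1) (hr : r = (q - 1) / m)
    (F : Type*) [Field F] [Fintype F] (hF : Fintype.card F = q) :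
    IsPrimitivePermGroup (Gqm F m) ↔ ∀ i, 1 ≤ i → i ≤ d - 1 → ¬ (r ∣ p ^ i - 1) := by
  subst hq hr
  rw [isPrimitivePermGroup_Gqm_iff]
  exact closure_mthPowers_eq_top_iff hp hF hm

/-- `G_{q,m}` is primitive iff `r = (q-1)/m` divides no `p^i - 1` with `1 ≤ i ≤ d-1`. -/
theorem stmt4 (p d q m r : ℕ) (hp : p.Prime) (hodd : Odd q) (hq : q = p ^ d)
    (hm : m ∣ q - 1) (hr : r = (q - 1) / m)
    (F : Type*) [Field F] [Fintype F] (hF : Fintype.card F = q) :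
    IsPrimitivePermGroup (Gqm F m) ↔ ∀ i, 1 ≤ i → i ≤ d - 1 → ¬ (r ∣ p ^ i - 1) :=
  stmt4_general p d q m r hp hq hm hr F hF
end

section
/- Let q be an odd prime power, let m divide q − 1, set r = (q−1)/m, define (r̄, m̄) = (r, m) if r is even and (2r, m/2) if r is odd, and let γ be a generator of the cyclic group 𝔽_q^*. For i ∈ {0, …, m̄ − 1} set Δᵢ = { {α, β} : α, β ∈ 𝔽_q, α − β ∈ S_{q,m̄}·γ^i }. Then the orbits of G_{q,m} acting on the set of 2-element subsets of 𝔽_q are precisely Δ₀, …, Δ_{m̄−1}. -/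
section Gqm

variable {F : Type*} [Field F] {m : ℕ}

theorem mem_Gqm_iff {g : Equiv.Perm F} :
    g ∈ Gqm F m ↔ ∃ c : F, c ≠ 0 ∧ ∃ v : F, ∀ x, g x = x * c ^ m + v := by
  constructor
  · intro hg
    induction hg using Subgroup.closure_induction with
    | mem g hg =>
      rcases hg with ⟨v, rfl⟩ | ⟨a, ha, ⟨c, hc, rfl⟩, rfl⟩
      · exact ⟨1, one_ne_zero, v, fun x => by simp⟩
      · exact ⟨c, hc, 0, fun x => by simp [Equiv.mulRight₀]⟩
    | one => exact ⟨1, one_ne_zero, 0, fun x => by simp⟩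
    | mul g h _ _ ihg ihh =>
      obtain ⟨c, hc, v, hg⟩ := ihg
      obtain ⟨d, hd, w, hh⟩ := ihh
      refine ⟨d * c, mul_ne_zero hd hc, w * c ^ m + v, fun x => ?_⟩
      rw [Equiv.Perm.mul_apply, hh, hg]
      ring
    | inv g _ ihg =>
      obtain ⟨c, hc, v, hg⟩ := ihg
      refine ⟨c⁻¹, inv_ne_zero hc, -v * (c ^ m)⁻¹, fun x => Equiv.Perm.inv_eq_iff_eq.mpr ?_⟩
      rw [hg, inv_pow]
      field_simp
      ring
  · rintro ⟨c, hc, v, hg⟩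
    have hcm : c ^ m ≠ 0 := pow_ne_zero m hc
    have hg_eq : g = Equiv.addRight v * Equiv.mulRight₀ (c ^ m) hcm := Equiv.ext hg
    exact hg_eq ▸ Subgroup.mul_mem _ (Subgroup.subset_closure (Or.inl ⟨v, rfl⟩))
      (Subgroup.subset_closure (Or.inr ⟨c ^ m, hcm, ⟨c, hc, rfl⟩, rfl⟩))

theorem exists_image_pair_of_mem_Gqm {g : Equiv.Perm F} (hg : g ∈ Gqm F m) (α β : F) :
    ∃ c : F, c ≠ 0 ∧ ∃ α' β' : F, ⇑g '' {α, β} = {α', β'} ∧ α' - β' = c ^ m * (α - β) := by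
  obtain ⟨c, hc, v, hgx⟩ := mem_Gqm_iff.mp hg
  exact ⟨c, hc, g α, g β, Set.image_pair _ _ _, by rw [hgx, hgx]; ring⟩

theorem exists_mem_Gqm_image_pair_eq {α β a b d : F} (hd : d ≠ 0)
    (hab : a - b = d ^ m * (α - β)) : ∃ g ∈ Gqm F m, ⇑g '' {α, β} = {a, b} := by
  let g := Equiv.addRight (a - α * d ^ m) * Equiv.mulRight₀ (d ^ m) (pow_ne_zero m hd)
  refine ⟨g, mem_Gqm_iff.mpr ⟨d, hd, _, fun _ => rfl⟩, ?_⟩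
  have hα : g α = a := show α * d ^ m + (a - α * d ^ m) = a by ring
  have hβ : g β = b := show β * d ^ m + (a - α * d ^ m) = b by linear_combination hab
  rw [Set.image_pair, hα, hβ]

theorem orbit_pair_eq {n : ℕ} (hnm : n ∣ m)
    (hpm : ∀ c : F, c ≠ 0 → ∃ d : F, d ≠ 0 ∧ (c ^ n = d ^ m ∨ c ^ n = -d ^ m))
    {e α β : F} (hαβ : ∃ c : F, c ≠ 0 ∧ α - β = c ^ n * e) :
    {t : Set F | ∃ g ∈ Gqm F m, ⇑g '' {α, β} = t} =
      {s : Set F | ∃ α' β' : F, s = {α', β'} ∧ ∃ c : F, c ≠ 0 ∧ α' - β' = c ^ n * e} := by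
  obtain ⟨c₀, hc₀, hαβ⟩ := hαβ
  ext t
  constructor
  · rintro ⟨g, hg, rfl⟩
    obtain ⟨k, rfl⟩ := hnm
    obtain ⟨c, hc, α', β', himg, hdiff⟩ := exists_image_pair_of_mem_Gqm hg α β
    refine ⟨α', β', himg, c₀ * c ^ k, mul_ne_zero hc₀ (pow_ne_zero k hc), ?_⟩
    rw [hdiff, hαβ, mul_pow, ← pow_mul, mul_comm k n]
    ring
  · rintro ⟨α', β', rfl, c, hc, hdiff⟩
    obtain ⟨d, hd, hcd | hcd⟩ := hpm (c / c₀) (div_ne_zero hc hc₀) <;>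
      rw [div_pow, div_eq_iff (pow_ne_zero n hc₀)] at hcd
    · exact exists_mem_Gqm_image_pair_eq hd (by linear_combination hdiff - d ^ m * hαβ + e * hcd)
    · rw [Set.pair_comm α' β']
      exact exists_mem_Gqm_image_pair_eq hd (by linear_combination -hdiff - d ^ m * hαβ - e * hcd)

end Gqm

theorem exists_pow_eq_or_eq_neg_of_pow_mul_eq_neg_one {M : Type*} [Monoid M] [HasDistribNeg M]
    {ζ : M} {n r : ℕ} (hζ : ζ ^ (n * r) = -1) (hr : Odd r) (k : ℕ) :
    ∃ j, (ζ ^ k) ^ n = (ζ ^ j) ^ (2 * n) ∨ (ζ ^ k) ^ n = -(ζ ^ j) ^ (2 * n) := by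
  obtain ⟨j, rfl | rfl⟩ := Nat.even_or_odd' k
  · exact ⟨j, .inl (by rw [← pow_mul, ← pow_mul]; ring_nf)⟩
  · obtain ⟨t, rfl⟩ := hr
    refine ⟨j + t + 1, .inr ?_⟩
    have hexp : (j + t + 1) * (2 * n) = (2 * j + 1) * n + n * (2 * t + 1) := by ring
    rw [← pow_mul, ← pow_mul, hexp, pow_add, hζ, mul_neg_one, neg_neg]

theorem two_dvd_of_not_two_dvd_sub_one_div {q m : ℕ} (hq : Odd q) (hm : m ∣ q - 1)
    (hr : ¬ 2 ∣ (q - 1) / m) : 2 ∣ m := by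
  have h2 : 2 ∣ m * ((q - 1) / m) := by
    rw [Nat.mul_div_cancel' hm]
    exact (Nat.Odd.sub_odd hq odd_one).two_dvd
  exact (Nat.prime_two.dvd_mul.mp h2).resolve_right hr

section Generator

variable {F : Type*} [Field F] {γ : Fˣ}

theorem exists_pow_eq_of_forall_mem_zpowers [Finite F] (hγ : ∀ x : Fˣ, x ∈ Subgroup.zpowers γ)
    {x : F} (hx : x ≠ 0) : ∃ k : ℕ, (γ : F) ^ k = x := by
  obtain ⟨k, hk : γ ^ k = Units.mk0 x hx⟩ := mem_powers_iff_mem_zpowers.mpr (hγ (Units.mk0 x hx))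
  exact ⟨k, by rw [← Units.val_pow_eq_pow_val, hk, Units.val_mk0]⟩

theorem pow_eq_neg_one_of_forall_mem_zpowers [Finite F] (hγ : ∀ x : Fˣ, x ∈ Subgroup.zpowers γ)
    {n : ℕ} (hn : Nat.card Fˣ = 2 * n) : (γ : F) ^ n = -1 := by
  have hprim : IsPrimitiveRoot (γ : F) (2 * n) := by
    rw [← hn, ← orderOf_eq_card_of_forall_mem_zpowers hγ, ← orderOf_units]
    exact IsPrimitiveRoot.orderOf _
  have hn0 : n ≠ 0 := by
    have := Nat.card_pos (α := Fˣ)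
    omega
  have hprim2 := hprim.pow_of_dvd hn0 (dvd_mul_left n 2)
  rw [Nat.mul_div_cancel 2 (Nat.pos_of_ne_zero hn0)] at hprim2
  exact hprim2.eq_neg_one_of_two_right

theorem exists_pow_div_two_eq_or_eq_neg_pow [Fintype F] {q m : ℕ} (hq : Odd q)
    (hF : Fintype.card F = q) (hm : m ∣ q - 1) (hγ : ∀ x : Fˣ, x ∈ Subgroup.zpowers γ)
    (hr : ¬ 2 ∣ (q - 1) / m) {c : F} (hc : c ≠ 0) :
    ∃ d : F, d ≠ 0 ∧ (c ^ (m / 2) = d ^ m ∨ c ^ (m / 2) = -d ^ m) := by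
  obtain ⟨n, rfl⟩ := two_dvd_of_not_two_dvd_sub_one_div hq hm hr
  have hcard : Nat.card Fˣ = 2 * (n * ((q - 1) / (2 * n))) := by
    rw [Nat.card_units, Nat.card_eq_fintype_card, hF, ← mul_assoc, Nat.mul_div_cancel' hm]
  have hγn := pow_eq_neg_one_of_forall_mem_zpowers hγ hcard
  obtain ⟨k, rfl⟩ := exists_pow_eq_of_forall_mem_zpowers hγ hc
  obtain ⟨j, hj⟩ :=
    exists_pow_eq_or_eq_neg_of_pow_mul_eq_neg_one hγn (Nat.odd_iff.mpr (by omega)) k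
  rw [Nat.mul_div_cancel_left n two_pos]
  exact ⟨_, pow_ne_zero j γ.ne_zero, hj⟩

end Generator

/-- The orbits of `G_{q,m}` on the 2-element subsets of `F_q` are precisely the sets
`Δ_i = {{α, β} : α - β ∈ S_{q,m̄} γ^i}` for `i ∈ {0, …, m̄ - 1}`. -/
theorem stmt5 (q m : ℕ) (hodd : Odd q) (F : Type*) [Field F] [Fintype F]
    (hF : Fintype.card F = q) (hm : m ∣ q - 1)
    (γ : Fˣ) (hγ : ∀ x : Fˣ, x ∈ Subgroup.zpowers γ)
    (mbar : ℕ) (hmbar : mbar = if 2 ∣ (q - 1) / m then m else m / 2)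
    (Δ : ℕ → Set (Set F))
    (hΔ : ∀ i, Δ i = {s : Set F | ∃ α β : F,
      s = {α, β} ∧ ∃ c : F, c ≠ 0 ∧ α - β = c ^ mbar * (γ : F) ^ i}) :
    {O : Set (Set F) | ∃ s : Set F, s.ncard = 2 ∧
        O = {t : Set F | ∃ g ∈ Gqm F m, (⇑(g : Equiv.Perm F)) '' s = t}} =
      {P : Set (Set F) | ∃ i < mbar, P = Δ i} := by
  have hq : 1 < q := hF ▸ Fintype.one_lt_card
  have hpm : ∀ c : F, c ≠ 0 → ∃ d : F, d ≠ 0 ∧ (c ^ mbar = d ^ m ∨ c ^ mbar = -d ^ m) := by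
    split_ifs at hmbar with hr <;> subst hmbar
    · exact fun c hc => ⟨c, hc, .inl rfl⟩
    · exact fun c hc => exists_pow_div_two_eq_or_eq_neg_pow hodd hF hm hγ hr hc
  have hmbar_dvd : mbar ∣ m := by
    split_ifs at hmbar with hr <;> subst hmbar
    exacts [dvd_rfl, Nat.div_dvd_of_dvd (two_dvd_of_not_two_dvd_sub_one_div hodd hm hr)]
  have hmbar_pos : 0 < mbar :=
    Nat.pos_of_dvd_of_pos hmbar_dvd (Nat.pos_of_dvd_of_pos hm (by omega))
  have horbit : ∀ α β i, (∃ c : F, c ≠ 0 ∧ α - β = c ^ mbar * (γ : F) ^ i) →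
      {t : Set F | ∃ g ∈ Gqm F m, ⇑g '' {α, β} = t} = Δ i :=
    fun α β i h => (hΔ i).symm ▸ orbit_pair_eq hmbar_dvd hpm h
  ext O
  constructor
  · rintro ⟨s, hs, rfl⟩
    obtain ⟨α, β, hne, rfl⟩ := Set.ncard_eq_two.mp hs
    obtain ⟨k, hk⟩ := exists_pow_eq_of_forall_mem_zpowers hγ (sub_ne_zero.mpr hne)
    refine ⟨k % mbar, Nat.mod_lt k hmbar_pos,
      horbit α β _ ⟨_, pow_ne_zero (k / mbar) γ.ne_zero, ?_⟩⟩
    rw [← hk, ← pow_mul, ← pow_add, Nat.div_add_mod']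
  · rintro ⟨i, -, rfl⟩
    exact ⟨{(γ : F) ^ i, 0}, Set.ncard_pair (pow_ne_zero i γ.ne_zero),
      (horbit _ _ i ⟨1, one_ne_zero, by rw [one_pow, one_mul, sub_zero]⟩).symm⟩
end

section
/- Let G be a finite group and C ⊆ G a subset with C = C⁻¹, 1 ∉ C, and C closed under conjugation by elements of G, and let Γ = Cay(G, C) be the Cayley graph with vertex set G in which g and h are adjacent iff gh⁻¹ ∈ C. If α(Γ)·ω(Γ) = |G|, then ω(Γ) = χ(Γ). -/
/-- An independent set: a set of pairwise non-adjacent vertices. -/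
def SimpleGraph.IsIndepSet' {V : Type*} (G : SimpleGraph V) (A : Set V) : Prop :=
  A.Pairwise fun a b => ¬ G.Adj a b

/-- The independence number of a graph. -/
noncomputable def SimpleGraph.indepNum' {V : Type*} (G : SimpleGraph V) : ℕ :=
  sSup {n | ∃ s : Finset V, s.card = n ∧ G.IsIndepSet' ↑s}

/-!
Let `K` be a maximum clique and `A` a maximum independent set of `Γ = Cay(G, C)`. Right
translations are automorphisms of `Γ`, so for `k ≠ k'` in `K` the translates `k⁻¹A` and `k'⁻¹A`
are disjoint: a common point would give an edge of `Γ` inside `A`. When `|K||A| = |G|` these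
translates therefore partition `G`, and since `C` is normal, left translations are automorphisms
too, so each `k⁻¹A` is independent. Colouring `g` by the `k` with `g ∈ k⁻¹A` is a proper
`ω(Γ)`-colouring.
-/

open Finset

namespace SimpleGraph

lemma indepNum'_eq_indepNum {V : Type*} (Γ : SimpleGraph V) : Γ.indepNum' = Γ.indepNum := by
  simp only [indepNum', indepNum, isNIndepSet_iff, IsIndepSet', and_comm]

end SimpleGraph

section CayleyGraph

variable {G : Type*} [Group G]

def cayleyGraph (C : Set G) : SimpleGraph G :=
  SimpleGraph.fromRel fun g h => g * h⁻¹ ∈ C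

variable {C : Set G}

@[simp]
lemma cayleyGraph_adj_mul_right {g h : G} (x : G) :
    (cayleyGraph C).Adj (g * x) (h * x) ↔ (cayleyGraph C).Adj g h := by
  simp [cayleyGraph, mul_assoc]

lemma cayleyGraph_adj_mul_left (hconj : ∀ g c : G, c ∈ C → g * c * g⁻¹ ∈ C) {g h : G}
    (x : G) (hgh : (cayleyGraph C).Adj g h) : (cayleyGraph C).Adj (x * g) (x * h) := by
  obtain ⟨hne, hgh | hhg⟩ := hgh
  · exact ⟨by simpa using hne, .inl (by simpa [mul_assoc] using hconj x _ hgh)⟩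
  · exact ⟨by simpa using hne, .inr (by simpa [mul_assoc] using hconj x _ hhg)⟩

lemma injective_inv_mul_of_isClique_of_isIndepSet {K A : Set G}
    (hK : (cayleyGraph C).IsClique K) (hA : (cayleyGraph C).IsIndepSet A) :
    Function.Injective fun p : K × A => (p.1 : G)⁻¹ * p.2 := by
  rintro ⟨⟨k, hk⟩, ⟨a, ha⟩⟩ ⟨⟨k', hk'⟩, ⟨a', ha'⟩⟩ heq
  simp only at heq
  obtain rfl | hkk := eq_or_ne k k'
  · simp [mul_left_cancel heq]
  · -- translating the edge `k k'` on the right by `k⁻¹ a` gives the edge `a a'`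
    have hadj : (cayleyGraph C).Adj a a' := by
      have := (cayleyGraph_adj_mul_right (k⁻¹ * a)).2 (hK hk hk' hkk)
      rwa [mul_inv_cancel_left, heq, mul_inv_cancel_left] at this
    exact absurd hadj (hA ha ha' hadj.ne)

variable [Fintype G]

lemma colorable_of_isClique_of_isIndepSet (hconj : ∀ g c : G, c ∈ C → g * c * g⁻¹ ∈ C)
    {K A : Finset G} (hK : (cayleyGraph C).IsClique (K : Set G))
    (hA : (cayleyGraph C).IsIndepSet (A : Set G)) (hcard : #K * #A = Fintype.card G) :
    (cayleyGraph C).Colorable #K := by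
  have hbij : Function.Bijective fun p : ↥(K : Set G) × ↥(A : Set G) => (p.1 : G)⁻¹ * p.2 := by
    refine (Fintype.bijective_iff_injective_and_card _).2
      ⟨injective_inv_mul_of_isClique_of_isIndepSet hK hA, ?_⟩
    simpa [Fintype.card_prod] using hcard
  let e := Equiv.ofBijective _ hbij
  have hcol : (cayleyGraph C).Coloring (K : Set G) := .mk (fun g => (e.symm g).1) <| by
    rintro g h hadj hkey
    obtain ⟨⟨k, a⟩, rfl⟩ := e.surjective g
    obtain ⟨⟨k', b⟩, rfl⟩ := e.surjective h
    obtain rfl : k = k' := by simpa using hkey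
    have hab := cayleyGraph_adj_mul_left hconj (k : G) hadj
    simp only [e, Equiv.ofBijective_apply, mul_inv_cancel_left] at hab
    exact hA a.2 b.2 hab.ne hab
  simpa using hcol.colorable

end CayleyGraph

theorem stmt10_general {G : Type*} [Group G] [Fintype G] (C : Set G)
    (hconj : ∀ g c : G, c ∈ C → g * c * g⁻¹ ∈ C)
    (Γ : SimpleGraph G)
    (hΓ : Γ = SimpleGraph.fromRel (fun g h => g * h⁻¹ ∈ C))
    (hprod : Γ.indepNum' * Γ.cliqueNum = Fintype.card G) :
    (Γ.cliqueNum : ℕ∞) = Γ.chromaticNumber := by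
  obtain rfl : Γ = cayleyGraph C := hΓ
  obtain ⟨K, hK⟩ := (cayleyGraph C).exists_isNClique_cliqueNum
  obtain ⟨A, hA⟩ := (cayleyGraph C).exists_isNIndepSet_indepNum
  rw [SimpleGraph.indepNum'_eq_indepNum] at hprod
  have hcol := colorable_of_isClique_of_isIndepSet hconj hK.isClique hA.isIndepSet
    (by rw [hK.card_eq, hA.card_eq, mul_comm, hprod])
  rw [hK.card_eq] at hcol
  exact le_antisymm (cayleyGraph C).cliqueNum_le_chromaticNumber hcol.chromaticNumber_le

/-- For a normal Cayley graph `Γ = Cay(G, C)` (with `C = C⁻¹`, `1 ∉ C` and `C`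
closed under conjugation), if `α(Γ)ω(Γ) = |G|` then `ω(Γ) = χ(Γ)`. -/
theorem stmt10 {G : Type*} [Group G] [Fintype G] (C : Set G)
    (hinv : C⁻¹ = C) (hone : (1 : G) ∉ C)
    (hconj : ∀ g c : G, c ∈ C → g * c * g⁻¹ ∈ C)
    (Γ : SimpleGraph G)
    (hΓ : Γ = SimpleGraph.fromRel (fun g h => g * h⁻¹ ∈ C))
    (hprod : Γ.indepNum' * Γ.cliqueNum = Fintype.card G) :
    (Γ.cliqueNum : ℕ∞) = Γ.chromaticNumber :=
  stmt10_general C hconj Γ hΓ hprod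
end

section
/- Let q be an odd prime power and m ≥ 2 an integer with 2m ∣ q − 1, let Γ = Γ_{q,m} be the generalized Paley graph and Γ̄ its complement graph. Then the following are equivalent: (1) ω(Γ)·α(Γ) = q; (2) ω(Γ) = χ(Γ); (3) ω(Γ̄)·α(Γ̄) = q; (4) ω(Γ̄) = χ(Γ̄). -/
def paleyGraph (F : Type*) [Field F] (m : ℕ) : SimpleGraph F :=
  SimpleGraph.fromRel (fun a b => a - b ∈ mthPowers F m)

/-!
`Γ_{q,m}` is invariant under the translations of `(𝔽_q, +)`. For such a graph, if `K` is a
clique and `A` an independent set then `(k, a) ↦ k + a` is injective on `K × A`, so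
`ω·α ≤ q`. If equality holds, a maximum clique and a maximum independent set tile the vertex
set as `K + A`, and colouring `k + a` by `k` is proper, so `χ = ω`. Conversely the colour
classes of an `ω`-colouring are independent, so `q ≤ ω·α`. Complementation swaps `ω` and `α`
and preserves translation invariance, which links the statements for `Γ` and `Γ̄`.
-/

open Finset

namespace SimpleGraph

variable {V : Type*} {G : SimpleGraph V}

theorem indepNum'_eq_indepNum_s11 (G : SimpleGraph V) : G.indepNum' = G.indepNum := by
  simp only [indepNum', indepNum, isNIndepSet_iff, IsIndepSet', and_comm]

theorem card_le_mul_indepNum_of_colorable [Fintype V] {n : ℕ} (h : G.Colorable n) :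
    Fintype.card V ≤ n * G.indepNum := by
  classical
  obtain ⟨C⟩ := h
  have card_colorClass_le (i : Fin n) : #{v | C v = i} ≤ G.indepNum :=
    IsIndepSet.card_le_indepNum fun v hv w hw _ hadj =>
      C.valid hadj ((mem_filter.mp hv).2.trans (mem_filter.mp hw).2.symm)
  calc Fintype.card V = ∑ i : Fin n, #{v | C v = i} := by
        rw [← card_univ]; exact card_eq_sum_card_fiberwise fun v _ => mem_univ (C v)
    _ ≤ ∑ _i : Fin n, G.indepNum := sum_le_sum fun i _ => card_colorClass_le i
    _ = n * G.indepNum := by simp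

section TranslationInvariant

variable [AddCommGroup V] (hG : ∀ x a b : V, G.Adj a b → G.Adj (a + x) (b + x))
include hG

theorem compl_adj_add_right : ∀ x a b : V, Gᶜ.Adj a b → Gᶜ.Adj (a + x) (b + x) := by
  rintro x a b ⟨hne, hnadj⟩
  refine ⟨fun h => hne (add_right_cancel h), fun hadj => hnadj ?_⟩
  simpa using hG (-x) _ _ hadj

theorem injOn_add_of_isClique_of_isIndepSet {K A : Set V} (hK : G.IsClique K)
    (hA : G.IsIndepSet A) : Set.InjOn (fun p : V × V => p.1 + p.2) (K ×ˢ A) := by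
  rintro ⟨k, a⟩ ⟨hk, ha⟩ ⟨k', a'⟩ ⟨hk', ha'⟩ (h : k + a = k' + a')
  by_cases hkk : k = k'
  · subst hkk
    rw [add_left_cancel h]
  have e : k + (a - k') = a' := by rw [← add_sub_assoc, h, add_sub_cancel_left]
  -- translating the edge `k k'` by `a - k'` gives an edge `a' a` inside `A`
  have hadj := hG (a - k') k k' (hK hk hk' hkk)
  rw [e, add_sub_cancel] at hadj
  exact absurd hadj (hA ha' ha fun h' => hkk (by subst h'; exact add_right_cancel h))

theorem card_mul_card_le_card [Fintype V] {K A : Finset V} (hK : G.IsClique K)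
    (hA : G.IsIndepSet A) : #K * #A ≤ Fintype.card V := by
  classical
  have hinj := injOn_add_of_isClique_of_isIndepSet hG hK hA
  rw [← coe_product] at hinj
  calc #K * #A = #((K ×ˢ A).image fun p => p.1 + p.2) := by
        rw [card_image_of_injOn hinj, card_product]
    _ ≤ Fintype.card V := card_le_univ _

theorem cliqueNum_mul_indepNum_le_card [Fintype V] :
    G.cliqueNum * G.indepNum ≤ Fintype.card V := by
  obtain ⟨K, hK⟩ := G.exists_isNClique_cliqueNum
  obtain ⟨A, hA⟩ := G.exists_isNIndepSet_indepNum
  simpa only [hK.card_eq, hA.card_eq] using card_mul_card_le_card hG hK.isClique hA.isIndepSet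

theorem colorable_cliqueNum_of_cliqueNum_mul_indepNum_eq_card [Fintype V]
    (h : G.cliqueNum * G.indepNum = Fintype.card V) : G.Colorable G.cliqueNum := by
  classical
  obtain ⟨K, hK⟩ := G.exists_isNClique_cliqueNum
  obtain ⟨A, hA⟩ := G.exists_isNIndepSet_indepNum
  have hinj := injOn_add_of_isClique_of_isIndepSet hG hK.isClique hA.isIndepSet
  rw [← coe_product] at hinj
  have hsurj : (K ×ˢ A).image (fun p => p.1 + p.2) = univ :=
    eq_univ_of_card _ (by rw [card_image_of_injOn hinj, card_product, hK.card_eq, hA.card_eq, h])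
  have hdecomp (v : V) : ∃ k ∈ K, v - k ∈ A := by
    obtain ⟨⟨k, a⟩, hka, rfl⟩ := mem_image.mp (hsurj ▸ mem_univ v)
    rw [mem_product] at hka
    exact ⟨k, hka.1, by simpa using hka.2⟩
  choose f hfK hfA using hdecomp
  let C : G.Coloring K := Coloring.mk (fun v => ⟨f v, hfK v⟩) fun {v w} hadj hvw => by
    have hfw : f w = f v := congrArg Subtype.val hvw.symm
    refine hA.isIndepSet (hfA v) (hfA w) (fun he => hadj.ne (sub_left_inj.mp (hfw ▸ he))) ?_
    simpa [hfw, sub_eq_add_neg] using hG (-f v) v w hadj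
  simpa only [Fintype.card_coe, hK.card_eq] using C.colorable

theorem cliqueNum_mul_indepNum_eq_card_iff [Fintype V] :
    G.cliqueNum * G.indepNum = Fintype.card V ↔ (G.cliqueNum : ℕ∞) = G.chromaticNumber := by
  refine ⟨fun h => le_antisymm G.cliqueNum_le_chromaticNumber ?_, fun h => ?_⟩
  · exact (colorable_cliqueNum_of_cliqueNum_mul_indepNum_eq_card hG h).chromaticNumber_le
  · have hcol : G.Colorable G.cliqueNum := chromaticNumber_le_iff_colorable.mp h.ge
    exact (cliqueNum_mul_indepNum_le_card hG).antisymm (card_le_mul_indepNum_of_colorable hcol)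

end TranslationInvariant

end SimpleGraph

theorem paleyGraph_adj_add_right (F : Type*) [Field F] (m : ℕ) (x a b : F)
    (h : (paleyGraph F m).Adj a b) : (paleyGraph F m).Adj (a + x) (b + x) := by
  simpa only [paleyGraph, SimpleGraph.fromRel_adj, add_sub_add_right_eq_sub, ne_eq,
    add_left_inj] using h

theorem stmt11_general (q m : ℕ)
    (F : Type*) [Field F] [Fintype F] (hF : Fintype.card F = q) :
    List.TFAE
      [(paleyGraph F m).cliqueNum * (paleyGraph F m).indepNum' = q,
       ((paleyGraph F m).cliqueNum : ℕ∞) = (paleyGraph F m).chromaticNumber,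
       (paleyGraph F m)ᶜ.cliqueNum * (paleyGraph F m)ᶜ.indepNum' = q,
       ((paleyGraph F m)ᶜ.cliqueNum : ℕ∞) = (paleyGraph F m)ᶜ.chromaticNumber] := by
  have hG := paleyGraph_adj_add_right F m
  simp only [SimpleGraph.indepNum'_eq_indepNum_s11, ← hF]
  tfae_have 1 ↔ 2 := SimpleGraph.cliqueNum_mul_indepNum_eq_card_iff hG
  tfae_have 3 ↔ 4 := SimpleGraph.cliqueNum_mul_indepNum_eq_card_iff
    (SimpleGraph.compl_adj_add_right hG)
  tfae_have 1 ↔ 3 := by rw [SimpleGraph.cliqueNum_compl, SimpleGraph.indepNum_compl, mul_comm]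
  tfae_finish

/-- For the generalized Paley graph `Γ = Γ_{q,m}` on `q` vertices, the following are
equivalent: `ω(Γ)α(Γ) = q`; `ω(Γ) = χ(Γ)`; `ω(Γ̄)α(Γ̄) = q`; `ω(Γ̄) = χ(Γ̄)`. -/
theorem stmt11 (q m : ℕ) (hodd : Odd q) (hm : 2 ≤ m) (hdvd : 2 * m ∣ q - 1)
    (F : Type*) [Field F] [Fintype F] (hF : Fintype.card F = q) :
    List.TFAE
      [(paleyGraph F m).cliqueNum * (paleyGraph F m).indepNum' = q,
       ((paleyGraph F m).cliqueNum : ℕ∞) = (paleyGraph F m).chromaticNumber,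
       (paleyGraph F m)ᶜ.cliqueNum * (paleyGraph F m)ᶜ.indepNum' = q,
       ((paleyGraph F m)ᶜ.cliqueNum : ℕ∞) = (paleyGraph F m)ᶜ.chromaticNumber] :=
  stmt11_general q m F hF
end

section
/- Let p be an odd prime, n ∈ ℕ, q = p^n, and let m > 1 satisfy 2m ∣ q − 1. If the generalized Paley graph Γ = Γ_{q,m} satisfies ω(Γ) = χ(Γ), then ω(Γ) = χ(Γ) = p^t for some t dividing n. -/
section Aux

/-- If `p^t - 1 ∣ p^n - 1` (with `p ≥ 3`, `t ≥ 1`) then `t ∣ n`. -/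
lemma aux_pow_sub_one_dvd {p t n : ℕ} (hp : 3 ≤ p) (ht : t ≠ 0)
    (h : p ^ t - 1 ∣ p ^ n - 1) : t ∣ n := by
  have hp1 : 1 < p := by omega
  have hpt : 3 ≤ p ^ t := le_trans hp (Nat.le_self_pow ht p)
  set M := p ^ t - 1 with hM
  have hM2 : 2 ≤ M := by omega
  haveI : NeZero M := ⟨by omega⟩
  have key : ∀ s : ℕ, (p : ZMod M) ^ s = 1 ↔ M ∣ p ^ s - 1 := by
    intro s
    have h1 : 1 ≤ p ^ s := Nat.one_le_pow _ _ (by omega)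
    have : ((p ^ s : ℕ) : ZMod M) = ((p ^ s - 1 : ℕ) : ZMod M) + 1 := by
      rw [← Nat.cast_one (R := ZMod M), ← Nat.cast_add]
      congr 1
      omega
    rw [← Nat.cast_pow, this]
    constructor
    · intro hh
      have : ((p ^ s - 1 : ℕ) : ZMod M) = 0 := by
        have := congrArg (· - (1 : ZMod M)) hh
        simpa using this
      exact (ZMod.natCast_eq_zero_iff _ _).mp this
    · intro hh
      rw [(ZMod.natCast_eq_zero_iff _ _).mpr hh, zero_add]
  have hpt1 : (p : ZMod M) ^ t = 1 := (key t).mpr dvd_rfl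
  have hpn1 : (p : ZMod M) ^ n = 1 := (key n).mpr h
  have hfin : IsOfFinOrder (p : ZMod M) :=
    isOfFinOrder_iff_pow_eq_one.mpr ⟨t, Nat.pos_of_ne_zero ht, hpt1⟩
  set d := orderOf (p : ZMod M) with hd
  have hdt : d ∣ t := orderOf_dvd_of_pow_eq_one hpt1
  have hdn : d ∣ n := orderOf_dvd_of_pow_eq_one hpn1
  have hd0 : d ≠ 0 := hfin.orderOf_pos.ne'
  have hMd : M ∣ p ^ d - 1 := (key d).mp (pow_orderOf_eq_one _)
  have hpd : 3 ≤ p ^ d := le_trans hp (Nat.le_self_pow hd0 p)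
  have hle : M ≤ p ^ d - 1 := Nat.le_of_dvd (by omega) hMd
  have htd : t ≤ d := (Nat.pow_le_pow_iff_right hp1).mp (by omega)
  have hdt' : d ≤ t := Nat.le_of_dvd (Nat.pos_of_ne_zero ht) hdt
  have : t = d := le_antisymm htd hdt'
  rw [this]; exact hdn

variable {F : Type*} [Field F] {m : ℕ}

lemma mthPowers_one_mem : (1 : F) ∈ mthPowers F m := ⟨1, one_ne_zero, one_pow m⟩

lemma mthPowers_ne_zero {x : F} (hx : x ∈ mthPowers F m) : x ≠ 0 := by
  obtain ⟨a, ha, rfl⟩ := hx; exact pow_ne_zero m ha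

lemma mthPowers_mul_mem {x y : F} (hx : x ∈ mthPowers F m) (hy : y ∈ mthPowers F m) :
    x * y ∈ mthPowers F m := by
  obtain ⟨a, ha, rfl⟩ := hx; obtain ⟨b, hb, rfl⟩ := hy
  exact ⟨a * b, mul_ne_zero ha hb, mul_pow a b m⟩

lemma mthPowers_inv_mem {x : F} (hx : x ∈ mthPowers F m) : x⁻¹ ∈ mthPowers F m := by
  obtain ⟨a, ha, rfl⟩ := hx; exact ⟨a⁻¹, inv_ne_zero ha, by rw [inv_pow]⟩

lemma mthPowers_neg_one_mem [Fintype F] {q : ℕ} (hF : Fintype.card F = q)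
    (hm : 1 < m) (hdvd : 2 * m ∣ q - 1) : (-1 : F) ∈ mthPowers F m := by
  classical
  obtain ⟨g, hg⟩ := IsCyclic.exists_generator (α := Fˣ)
  have hord : orderOf g = q - 1 := by
    rw [orderOf_eq_card_of_forall_mem_zpowers hg, Nat.card_eq_fintype_card,
      Fintype.card_units, hF]
  obtain ⟨k, hk⟩ := hdvd
  have hq2 : 2 ≤ q := by rw [← hF]; exact Fintype.one_lt_card
  have hk1 : 1 ≤ k := by
    rcases Nat.eq_zero_or_pos k with h0 | h; · rw [h0, mul_zero] at hk; omega
    · exact h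
  have hkm0 : 0 < k * m := by positivity
  have hkm : k * m < q - 1 := by
    rw [hk]
    calc k * m < 2 * (k * m) := by omega
      _ = 2 * m * k := by ring
  set u := g ^ (k * m) with hu
  have hu2 : u ^ 2 = 1 := by
    rw [hu, ← pow_mul, show k * m * 2 = 2 * m * k by ring, ← hk, ← hord,
      pow_orderOf_eq_one]
  have hune : u ≠ 1 := by
    intro hcon
    have hd := orderOf_dvd_of_pow_eq_one hcon
    rw [hord] at hd
    have := Nat.le_of_dvd hkm0 hd
    omega
  have hval : ((u : F)) = -1 := by
    have h2 : (u : F) * (u : F) = 1 := by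
      have h3 : ((u ^ 2 : Fˣ) : F) = 1 := by rw [hu2]; simp
      rw [Units.val_pow_eq_pow_val, pow_two] at h3
      exact h3
    rcases mul_self_eq_one_iff.mp h2 with h1 | h1
    · exact absurd (Units.ext h1) hune
    · exact h1
  refine ⟨((g ^ k : Fˣ) : F), Units.ne_zero _, ?_⟩
  rw [← hval, hu, ← Units.val_pow_eq_pow_val, ← pow_mul]

lemma paley_adj (hneg : (-1 : F) ∈ mthPowers F m) {a b : F} :
    (paleyGraph F m).Adj a b ↔ a ≠ b ∧ a - b ∈ mthPowers F m := by
  unfold paleyGraph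
  rw [SimpleGraph.fromRel_adj]
  constructor
  · rintro ⟨hne, h | h⟩
    · exact ⟨hne, h⟩
    · refine ⟨hne, ?_⟩
      have := mthPowers_mul_mem hneg h
      rwa [neg_one_mul, neg_sub] at this
  · rintro ⟨hne, h⟩
    exact ⟨hne, Or.inl h⟩

/-- Images of cliques under affine maps `x ↦ a + s*x`, `s ∈ S`, are cliques. -/
lemma paley_clique_affine [DecidableEq F] (hneg : (-1 : F) ∈ mthPowers F m)
    {K : Finset F} {r : ℕ}
    (hK : (paleyGraph F m).IsNClique r K) {s : F} (hs : s ∈ mthPowers F m) (a : F) :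
    (paleyGraph F m).IsNClique r (K.image (fun x => a + s * x)) := by
  have hs0 : s ≠ 0 := mthPowers_ne_zero hs
  constructor
  · rintro x hx y hy hxy
    simp only [Finset.coe_image, Set.mem_image, Finset.mem_coe] at hx hy
    obtain ⟨x0, hx0, rfl⟩ := hx
    obtain ⟨y0, hy0, rfl⟩ := hy
    have hne : x0 ≠ y0 := by rintro rfl; exact hxy rfl
    have hadj := hK.1 hx0 hy0 hne
    rw [paley_adj hneg] at hadj ⊢
    refine ⟨hxy, ?_⟩
    have : a + s * x0 - (a + s * y0) = s * (x0 - y0) := by ring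
    rw [this]
    exact mthPowers_mul_mem hs hadj.2
  · have hinj : Function.Injective (fun x : F => a + s * x) := by
      intro x y h
      simp only at h
      exact mul_left_cancel₀ hs0 (add_left_cancel h)
    rw [Finset.card_image_of_injective _ hinj, hK.2]

end Aux

/-- If `ω(Γ_{q,m}) = χ(Γ_{q,m})` for `q = p^n`, then the common value is `p^t` for
some divisor `t` of `n`. -/
theorem stmt13 (p n q m : ℕ) (hp : p.Prime) (hpodd : Odd p) (hq : q = p ^ n)
    (hm : 1 < m) (hdvd : 2 * m ∣ q - 1)
    (F : Type*) [Field F] [Fintype F] (hF : Fintype.card F = q) :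
    ((paleyGraph F m).cliqueNum : ℕ∞) = (paleyGraph F m).chromaticNumber →
      ∃ t : ℕ, t ∣ n ∧ (paleyGraph F m).cliqueNum = p ^ t ∧
        (paleyGraph F m).chromaticNumber = ((p ^ t : ℕ) : ℕ∞) := by
  classical
  intro h
  set Γ := paleyGraph F m with hΓ
  set S := mthPowers F m with hS
  have hneg : (-1 : F) ∈ S := mthPowers_neg_one_mem hF hm hdvd
  have hone : (1 : F) ∈ S := mthPowers_one_mem
  -- 0 and 1 are adjacent
  have adj01 : Γ.Adj 0 1 := by
    rw [hΓ, paley_adj hneg]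
    refine ⟨zero_ne_one, ?_⟩
    rwa [zero_sub]
  set r := Γ.cliqueNum with hr
  -- r ≥ 2
  have hr2 : 2 ≤ r := by
    have hcl : Γ.IsClique ({0, 1} : Finset F) := by
      intro x hx y hy hxy
      simp only [Finset.coe_insert, Set.mem_insert_iff, Finset.coe_singleton,
        Set.mem_singleton_iff] at hx hy
      rcases hx with rfl | rfl <;> rcases hy with rfl | rfl
      · exact absurd rfl hxy
      · exact adj01
      · exact adj01.symm
      · exact absurd rfl hxy
    have hcard : ({0, 1} : Finset F).card = 2 := by
      rw [Finset.card_insert_of_notMem (by simp), Finset.card_singleton]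
    calc 2 = ({0, 1} : Finset F).card := hcard.symm
      _ ≤ Γ.cliqueNum := SimpleGraph.IsClique.card_le_cliqueNum (tc := hcl)
  -- a coloring with r colors
  have hcol : Γ.Colorable r := SimpleGraph.chromaticNumber_le_iff_colorable.mp h.ge
  obtain ⟨f⟩ := hcol
  -- a maximum clique containing 0
  obtain ⟨K, hK⟩ := Γ.exists_isNClique_cliqueNum
  have hKne : K.Nonempty := by
    rw [← Finset.card_pos, hK.2]; omega
  obtain ⟨k0, hk0⟩ := hKne
  set K0 : Finset F := K.image (fun x => (-k0) + 1 * x) with hK0def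
  have hK0 : Γ.IsNClique r K0 := paley_clique_affine hneg hK hone (-k0)
  have h0K0 : (0 : F) ∈ K0 := by
    rw [hK0def, Finset.mem_image]
    exact ⟨k0, hk0, by ring⟩
  -- injectivity of the coloring on cliques
  have injOnClique : ∀ {L : Finset F}, Γ.IsNClique r L →
      ∀ x ∈ L, ∀ y ∈ L, f x = f y → x = y := by
    intro L hL x hx y hy hfxy
    by_contra hne
    exact f.valid (hL.1 hx hy hne) hfxy
  -- every color appears on every r-clique
  have colorSurj : ∀ {L : Finset F}, Γ.IsNClique r L →
      ∀ j : Fin r, ∃ c ∈ L, f c = j := by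
    intro L hL j
    have himg : (L.image f).card = r := by
      rw [Finset.card_image_of_injOn (fun x hx y hy => injOnClique hL x hx y hy), hL.2]
    have : L.image f = Finset.univ := by
      apply Finset.eq_univ_of_card
      rw [himg, Fintype.card_fin]
    have hj : j ∈ L.image f := by rw [this]; exact Finset.mem_univ j
    obtain ⟨c, hc, hfc⟩ := Finset.mem_image.mp hj
    exact ⟨c, hc, hfc⟩
  -- nonzero elements of K0 are m-th powers
  have memS : ∀ c ∈ K0, c ≠ 0 → c ∈ S := by
    intro c hc hc0
    have hadj := hK0.1 hc h0K0 hc0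
    rw [hΓ, paley_adj hneg] at hadj
    rw [sub_zero] at hadj
    exact hadj.2
  have hf10 : f 1 ≠ f 0 := fun hcon => f.valid adj01 hcon.symm
  set I : Finset F := Finset.univ.filter (fun x => f x = f 0) with hIdef
  -- STEP A : q = |I| * r
  have stepA : I.card * r = q := by
    have hbij : (I ×ˢ K0).card = (Finset.univ : Finset F).card := by
      apply Finset.card_bij (fun pr _ => pr.1 - pr.2)
      · intro a ha; exact Finset.mem_univ _
      · rintro ⟨j1, c1⟩ h1 ⟨j2, c2⟩ h2 heq
        simp only [Finset.mem_product, hIdef, Finset.mem_filter] at h1 h2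
        simp only at heq
        set a := j1 - c1 with hadef
        have ha2 : j2 - c2 = a := heq.symm
        set L : Finset F := K0.image (fun x => a + 1 * x) with hLdef
        have hL : Γ.IsNClique r L := paley_clique_affine hneg hK0 hone a
        have hj1L : j1 ∈ L := by
          rw [hLdef, Finset.mem_image]
          exact ⟨c1, h1.2, by rw [one_mul, hadef]; ring⟩
        have hj2L : j2 ∈ L := by
          rw [hLdef, Finset.mem_image]
          refine ⟨c2, h2.2, ?_⟩
          rw [one_mul, ← ha2]; ring
        have hj : j1 = j2 :=
          injOnClique hL j1 hj1L j2 hj2L (by rw [h1.1.2, h2.1.2])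
        have hc : c1 = c2 := by
          have h' : j2 - c2 = j1 - c1 := by rw [ha2, hadef]
          rw [hj] at h'
          linear_combination h'
        exact Prod.ext hj hc
      · intro b _
        set L : Finset F := K0.image (fun x => b + 1 * x) with hLdef
        have hL : Γ.IsNClique r L := paley_clique_affine hneg hK0 hone b
        obtain ⟨c', hc'L, hfc'⟩ := colorSurj hL (f 0)
        rw [hLdef, Finset.mem_image] at hc'L
        obtain ⟨c, hcK0, hcc⟩ := hc'L
        refine ⟨(c', c), ?_, ?_⟩
        · simp only [Finset.mem_product, hIdef, Finset.mem_filter]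
          exact ⟨⟨Finset.mem_univ _, hfc'⟩, hcK0⟩
        · simp only
          rw [← hcc]; ring
    rw [Finset.card_product, hK0.2] at hbij
    rw [hbij, Finset.card_univ, hF]
  -- STEP B : (r-1) ∣ q - 1
  set S' : Finset F := Finset.univ.filter (fun x => x ∈ S) with hS'def
  set Q : Finset F := I.filter (fun x => 1 - x ∈ S) with hQdef
  set K1 : Finset F := K0.erase 0 with hK1def
  have hK1card : K1.card = r - 1 := by
    rw [hK1def, Finset.card_erase_of_mem h0K0, hK0.2]
  have stepB : Q.card * (r - 1) = S'.card := by
    have hbij : (Q ×ˢ K1).card = S'.card := by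
      apply Finset.card_bij (fun pr _ => (1 - pr.1) * pr.2⁻¹)
      · rintro ⟨j, c⟩ hjc
        simp only [Finset.mem_product, hQdef, hK1def, Finset.mem_filter,
          Finset.mem_erase] at hjc
        have hcS : c ∈ S := memS c hjc.2.2 hjc.2.1
        simp only [hS'def, Finset.mem_filter]
        exact ⟨Finset.mem_univ _, mthPowers_mul_mem hjc.1.2 (mthPowers_inv_mem hcS)⟩
      · rintro ⟨j1, c1⟩ h1 ⟨j2, c2⟩ h2 heq
        simp only [Finset.mem_product, hQdef, hK1def, Finset.mem_filter,
          Finset.mem_erase, hIdef] at h1 h2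
        simp only at heq
        have hc1 : c1 ≠ 0 := h1.2.1
        have hc2 : c2 ≠ 0 := h2.2.1
        set s := (1 - j1) * c1⁻¹ with hsdef
        have hs2 : (1 - j2) * c2⁻¹ = s := heq.symm
        have he1 : 1 - j1 = s * c1 := by
          rw [hsdef]; field_simp
        have he2 : 1 - j2 = s * c2 := by
          rw [← hs2]; field_simp
        have hsS : s ∈ S :=
          mthPowers_mul_mem h1.1.2 (mthPowers_inv_mem (memS c1 h1.2.2 hc1))
        have hnsS : -s ∈ S := by
          have := mthPowers_mul_mem hneg hsS
          rwa [neg_one_mul] at this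
        set L : Finset F := K0.image (fun x => 1 + (-s) * x) with hLdef
        have hL : Γ.IsNClique r L := paley_clique_affine hneg hK0 hnsS 1
        have hj1L : j1 ∈ L := by
          rw [hLdef, Finset.mem_image]
          refine ⟨c1, h1.2.2, ?_⟩
          have : j1 = 1 - s * c1 := by rw [← he1]; ring
          rw [this]; ring
        have hj2L : j2 ∈ L := by
          rw [hLdef, Finset.mem_image]
          refine ⟨c2, h2.2.2, ?_⟩
          have : j2 = 1 - s * c2 := by rw [← he2]; ring
          rw [this]; ring
        have hj : j1 = j2 :=
          injOnClique hL j1 hj1L j2 hj2L (by rw [h1.1.1.2, h2.1.1.2])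
        have hs0 : s ≠ 0 := mthPowers_ne_zero hsS
        have hc : c1 = c2 := by
          have : s * c1 = s * c2 := by rw [← he1, ← he2, hj]
          exact mul_left_cancel₀ hs0 this
        exact Prod.ext hj hc
      · intro x hx
        simp only [hS'def, Finset.mem_filter] at hx
        have hxS : x ∈ S := hx.2
        have hnxS : -x ∈ S := by
          have := mthPowers_mul_mem hneg hxS
          rwa [neg_one_mul] at this
        set L : Finset F := K0.image (fun y => 1 + (-x) * y) with hLdef
        have hL : Γ.IsNClique r L := paley_clique_affine hneg hK0 hnxS 1
        obtain ⟨c', hc'L, hfc'⟩ := colorSurj hL (f 0)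
        rw [hLdef, Finset.mem_image] at hc'L
        obtain ⟨c, hcK0, hcc⟩ := hc'L
        have hc0 : c ≠ 0 := by
          rintro rfl
          apply hf10
          rw [← hfc']
          congr 1
          rw [← hcc]; ring
        have hx0 : x ≠ 0 := mthPowers_ne_zero hxS
        have hsub : 1 - c' = x * c := by rw [← hcc]; ring
        refine ⟨(c', c), ?_, ?_⟩
        · simp only [Finset.mem_product, hQdef, hK1def, Finset.mem_filter,
            Finset.mem_erase, hIdef]
          refine ⟨⟨⟨Finset.mem_univ _, hfc'⟩, ?_⟩, hc0, hcK0⟩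
          rw [hsub]
          exact mthPowers_mul_mem hxS (memS c hcK0 hc0)
        · simp only
          rw [hsub]
          field_simp
    rw [Finset.card_product, hK1card] at hbij
    exact hbij
  -- |S'| divides q - 1 (it is the cardinality of a subgroup of Fˣ)
  have hS'dvd : S'.card ∣ q - 1 := by
    set H : Subgroup Fˣ := (powMonoidHom m : Fˣ →* Fˣ).range with hHdef
    have hcardH : Fintype.card H = S'.card := by
      have : Function.Bijective (fun h : H => (⟨((h : Fˣ) : F), by
        obtain ⟨u, hu⟩ := h
        obtain ⟨a, ha⟩ := hu
        simp only [hS'def, Finset.mem_filter]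
        refine ⟨Finset.mem_univ _, ⟨(a : F), Units.ne_zero a, ?_⟩⟩
        rw [← ha]
        simp [powMonoidHom]⟩ : {x // x ∈ S'})) := by
        constructor
        · intro h1 h2 heq
          have : ((h1 : Fˣ) : F) = ((h2 : Fˣ) : F) := congrArg Subtype.val heq
          exact Subtype.ext (Units.ext this)
        · rintro ⟨x, hxmem⟩
          simp only [hS'def, Finset.mem_filter] at hxmem
          obtain ⟨a, ha0, ham⟩ := hxmem.2
          refine ⟨⟨(Units.mk0 a ha0) ^ m, ⟨Units.mk0 a ha0, rfl⟩⟩, ?_⟩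
          apply Subtype.ext
          simp only
          rw [Units.val_pow_eq_pow_val, Units.val_mk0, ham]
      rw [← Fintype.card_coe S']
      exact Fintype.card_of_bijective this
    have hHdvd : Fintype.card H ∣ Fintype.card Fˣ := by
      rw [← Nat.card_eq_fintype_card, ← Nat.card_eq_fintype_card]
      exact Subgroup.card_subgroup_dvd_card H
    rw [hcardH, Fintype.card_units, hF] at hHdvd
    exact hHdvd
  -- conclude
  have hrq : r ∣ q := Dvd.intro_left _ stepA
  rw [hq] at hrq
  obtain ⟨t, htn, hrt⟩ := (Nat.dvd_prime_pow hp).mp hrq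
  have ht0 : t ≠ 0 := by
    rintro rfl
    rw [pow_zero] at hrt
    omega
  have hp3 : 3 ≤ p := by
    have h2 := hp.two_le
    rcases Nat.odd_iff.mp hpodd with hodd
    omega
  have hr1dvd : p ^ t - 1 ∣ p ^ n - 1 := by
    rw [← hrt, ← hq]
    exact dvd_trans (Dvd.intro_left _ stepB) hS'dvd
  have htdvd : t ∣ n := aux_pow_sub_one_dvd hp3 ht0 hr1dvd
  refine ⟨t, htdvd, hrt, ?_⟩
  rw [← h, ← hrt]
end
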